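/- arXiv:1809.08480 — 9 statements merged into one kernel-verified Lean document; each statement's English description precedes it below -/
import Mathlib

section
/- Suppose X is a set of cardinals, U(κ, μ, θ, χ) holds for each χ ∈ X, and cf(sup X) < cf(θ). Then U(κ, μ, θ, sup X) holds. -/
open Cardinal Set Ordinal

noncomputable section

/-- `s` (a set in a `Type 1`, such as a set of ordinals) has small cardinality `μ`. -/
def HasCard {α : Type 1} (s : Set α) (μ : Cardinal.{0}) : Prop :=
  Cardinal.mk s = Cardinal.lift.{1, 0} μ

/-- `a < b` for sets of ordinals: every element of `a` is below every element of `b`. -/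
def SetLT (a b : Set Ordinal) : Prop := ∀ α ∈ a, ∀ β ∈ b, α < β

/-- `A` is a family of `κ`-many pairwise disjoint subsets of `κ`, each of cardinality `χ'`. -/
def IsDisjFamily (κ χ' : Cardinal) (A : Set (Set Ordinal)) : Prop :=
  (∀ a ∈ A, a ⊆ Set.Iio κ.ord ∧ HasCard a χ') ∧
    A.PairwiseDisjoint id ∧ HasCard A κ

/-- `A` is a family of `κ`-many pairwise disjoint subsets of `κ`, each of cardinality `< χ`. -/
def IsDisjFamilyLT (κ χ : Cardinal) (A : Set (Set Ordinal)) : Prop :=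
  (∀ a ∈ A, a ⊆ Set.Iio κ.ord ∧ Cardinal.mk a < Cardinal.lift.{1, 0} χ) ∧
    A.PairwiseDisjoint id ∧ HasCard A κ

/-- `c` is a coloring of pairs of ordinals below `κ` with colors `< θ`. -/
def IsColoring (κ θ : Cardinal) (c : Ordinal → Ordinal → Ordinal) : Prop :=
  ∀ α β : Ordinal, α < β → β < κ.ord → c α β < θ.ord

/-- `c` witnesses `U(κ, μ, θ, χ)`. -/
def WitnessU (κ μ θ χ : Cardinal) (c : Ordinal → Ordinal → Ordinal) : Prop :=
  IsColoring κ θ c ∧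
    ∀ χ' < χ, ∀ A : Set (Set Ordinal), IsDisjFamily κ χ' A →
      ∀ i < θ.ord, ∃ B ⊆ A, HasCard B μ ∧
        ∀ a ∈ B, ∀ b ∈ B, SetLT a b → ∀ α ∈ a, ∀ β ∈ b, i < c α β

/-- The principle `U(κ, μ, θ, χ)`. -/
def U (κ μ θ χ : Cardinal) : Prop := ∃ c, WitnessU κ μ θ χ c

/-- `D` is a club in (the ordinal) `o`: a closed and unbounded subset of `o`. -/
def IsClubOrd (D : Set Ordinal) (o : Ordinal) : Prop :=
  D ⊆ Set.Iio o ∧ (∀ α < o, ∃ β ∈ D, α ≤ β) ∧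
    ∀ γ < o, 0 < γ → (∀ x < γ, ∃ β ∈ D, x < β ∧ β < γ) → γ ∈ D

/-- `S` is stationary in `o`: it meets every club in `o`. -/
def IsStationaryOrd (S : Set Ordinal) (o : Ordinal) : Prop :=
  ∀ D, IsClubOrd D o → (S ∩ D).Nonempty

/-!
Choose a family `(χᵢ)_{i ∈ ι}` in `X`, cofinal in `sup X`, with `|ι| = cf(sup X) < cf(θ)`, and
witnesses `cᵢ` of `U(κ, μ, θ, χᵢ)`. Their pointwise supremum `c` still takes values below `θ`
because fewer than `cf(θ)` ordinals below `θ` are bounded below `θ`. Raising the colors only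
helps, so `c` inherits the homogeneity of every `cᵢ`, and any `χ' < sup X` lies below some `χᵢ`.
-/

theorem Ordinal.exists_cofinal_family (o : Ordinal.{u}) :
    ∃ (ι : Type u) (f : ι → Ordinal.{u}),
      #ι = o.cof ∧ (∀ i, f i < o) ∧ ∀ b < o, ∃ i, b ≤ f i := by
  obtain ⟨s, hs, hcard⟩ := Order.exists_cof_eq o.ToType
  rw [cof_toType] at hcard
  refine ⟨s, fun x ↦ (ToType.toOrd x.1).1, hcard, fun x ↦ (ToType.toOrd x.1).2, ?_⟩
  intro b hb
  obtain ⟨x, hx, hbx⟩ := hs (ToType.mk ⟨b, hb⟩)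
  exact ⟨⟨x, hx⟩, ToType.mk.le_symm_apply.2 hbx⟩

theorem Cardinal.exists_cofinal_family_of_sSup (X : Set Cardinal.{u}) :
    ∃ (ι : Type u) (χ : ι → Cardinal.{u}),
      #ι = (sSup X).ord.cof ∧ (∀ i, χ i ∈ X) ∧ ∀ χ' < sSup X, ∃ i, χ' < χ i := by
  obtain ⟨ι, f, hι, hf_lt, hf_cofinal⟩ := Ordinal.exists_cofinal_family (sSup X).ord
  have hfX : ∀ i, ∃ χ ∈ X, (f i).card < χ := fun i ↦
    exists_lt_of_lt_csSup' (lt_ord.1 (hf_lt i))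
  choose χ hχX hχ using hfX
  refine ⟨ι, χ, hι, hχX, fun χ' hχ' ↦ ?_⟩
  obtain ⟨i, hi⟩ := hf_cofinal χ'.ord (ord_lt_ord.2 hχ')
  exact ⟨i, (ord_le.1 hi).trans_lt (hχ i)⟩

section Coloring

variable {κ μ θ χ : Cardinal}

theorem IsColoring.iSup {ι : Type} {c : ι → Ordinal → Ordinal → Ordinal}
    (hι : #ι < θ.ord.cof) (hc : ∀ i, IsColoring κ θ (c i)) :
    IsColoring κ θ (fun α β ↦ ⨆ i, c i α β) :=
  fun α β hαβ hβ ↦ iSup_lt_of_lt_cof hι fun i ↦ hc i α β hαβ hβ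

theorem WitnessU.of_le {c d : Ordinal → Ordinal → Ordinal} (hc : WitnessU κ μ θ χ c)
    (hd : IsColoring κ θ d) (hcd : ∀ α β, c α β ≤ d α β) : WitnessU κ μ θ χ d := by
  refine ⟨hd, fun χ' hχ' A hA i hi ↦ ?_⟩
  obtain ⟨B, hBA, hB, hBc⟩ := hc.2 χ' hχ' A hA i hi
  exact ⟨B, hBA, hB, fun a ha b hb hab α hα β hβ ↦
    (hBc a ha b hb hab α hα β hβ).trans_le (hcd α β)⟩

theorem WitnessU.iSup {ι : Type} {ν : ι → Cardinal} {c : ι → Ordinal → Ordinal → Ordinal}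
    (hι : #ι < θ.ord.cof) (hc : ∀ i, WitnessU κ μ θ (ν i) (c i))
    (hν : ∀ χ' < χ, ∃ i, χ' < ν i) :
    WitnessU κ μ θ χ (fun α β ↦ ⨆ i, c i α β) := by
  have hcolor := IsColoring.iSup hι fun i ↦ (hc i).1
  refine ⟨hcolor, fun χ' hχ' ↦ ?_⟩
  obtain ⟨i, hi⟩ := hν χ' hχ'
  exact ((hc i).of_le hcolor fun α β ↦ Ordinal.le_iSup (fun i ↦ c i α β) i).2 χ' hi

end Coloring

theorem stmt1_general (κ μ θ : Cardinal) (X : Set Cardinal)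
    (hU : ∀ χ ∈ X, U κ μ θ χ)
    (hcf : (sSup X).ord.cof < θ.ord.cof) :
    U κ μ θ (sSup X) := by
  obtain ⟨ι, χ, hι, hχX, hχ_cofinal⟩ := exists_cofinal_family_of_sSup X
  choose c hc using fun i ↦ hU (χ i) (hχX i)
  exact ⟨_, WitnessU.iSup (hι ▸ hcf) hc hχ_cofinal⟩

theorem stmt1 (κ μ θ : Cardinal) (X : Set Cardinal)
    (hκreg : κ.IsRegular) (hκunc : ℵ₀ < κ) (hμκ : μ ≤ κ) (hθκ : θ ≤ κ)
    (hXκ : ∀ χ ∈ X, χ ≤ κ)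
    (hU : ∀ χ ∈ X, U κ μ θ χ)
    (hcf : (sSup X).ord.cof < θ.ord.cof) :
    U κ μ θ (sSup X) :=
  stmt1_general κ μ θ X hU hcf
end
end

section
/- If a coloring c : [κ]² → θ witnesses U(κ, κ, θ, 3), then it also witnesses U(κ, κ, θ, ω). -/
open Cardinal Set Ordinal

noncomputable section

/-- `D` is a club in (the ordinal) `o`: a closed and unbounded subset of `o`. -/
def IsClubBelow (D : Set Ordinal) (o : Ordinal) : Prop :=
  D ⊆ Set.Iio o ∧ (∀ α < o, ∃ β ∈ D, α ≤ β) ∧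
    ∀ γ < o, 0 < γ → (∀ x < γ, ∃ β ∈ D, x < β ∧ β < γ) → γ ∈ D

/-- `S` is stationary in `o`: it meets every club in `o`. -/
def IsStationaryBelow (S : Set Ordinal) (o : Ordinal) : Prop :=
  ∀ D, IsClubBelow D o → (S ∩ D).Nonempty

/-!
Enumerate each `a ∈ A` as `E a : Fin n → Ordinal`. It suffices to shrink the family, one pair
of positions `(j, k)` at a time, so that `i < c (E a j) (E b k)` whenever `a < b`. For a single
pair, the sets `{E a j, E a k}` have one or two elements; keeping the `κ`-many members on
which this size is constant, they form a disjoint family of sets of size `< 3`, to which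
`U(κ, κ, θ, 3)` applies.
-/

lemma exists_forall_of_refine {α ι : Type*} [Finite ι] {P : Set α → Prop}
    {Q : ι → Set α → Prop} (hQ : ∀ j ⦃B B'⦄, B' ⊆ B → Q j B → Q j B')
    (hrefine : ∀ j B, P B → ∃ B' ⊆ B, P B' ∧ Q j B') {A : Set α} (hA : P A) :
    ∃ B, P B ∧ ∀ j, Q j B := by
  classical
  have := Fintype.ofFinite ι
  suffices ∀ s : Finset ι, ∃ B, P B ∧ ∀ j ∈ s, Q j B by
    simpa using this Finset.univ
  intro s
  induction s using Finset.induction_on with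
  | empty => exact ⟨A, hA, by simp⟩
  | insert j s _ ih =>
    obtain ⟨B, hB, hQB⟩ := ih
    obtain ⟨B', hB'B, hB', hQjB'⟩ := hrefine j B hB
    refine ⟨B', hB', fun k hk => ?_⟩
    rcases Finset.mem_insert.mp hk with rfl | hk
    · exact hQjB'
    · exact hQ k hB'B (hQB k hk)

lemma HasCard.exists_range_eq {α : Type 1} {s : Set α} {n : ℕ} (h : HasCard s n) :
    ∃ E : Fin n → α, range E = s := by
  obtain ⟨e⟩ := mk_eq_nat_iff.mp (h.trans (lift_natCast n))
  exact ⟨Subtype.val ∘ e.symm, by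
    rw [range_comp, e.symm.range_eq_univ, image_univ, Subtype.range_coe]⟩

lemma HasCard.sep_or_sep_not {α : Type 1} {B : Set α} {κ : Cardinal} (hκ : ℵ₀ ≤ κ)
    (hB : HasCard B κ) (p : α → Prop) :
    HasCard {a ∈ B | p a} κ ∨ HasCard {a ∈ B | ¬p a} κ := by
  by_contra! h
  have hlt : ∀ q : α → Prop, ¬HasCard {a ∈ B | q a} κ → #{a ∈ B | q a} < lift κ :=
    fun q hq => (hB ▸ mk_le_mk_of_subset (sep_subset B q)).lt_of_ne hq
  have hcover : B ⊆ {a ∈ B | p a} ∪ {a ∈ B | ¬p a} := fun a ha => by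
    by_cases hpa : p a
    exacts [Or.inl ⟨ha, hpa⟩, Or.inr ⟨ha, hpa⟩]
  have hle : lift κ ≤ #{a ∈ B | p a} + #{a ∈ B | ¬p a} :=
    hB ▸ (mk_le_mk_of_subset hcover).trans (mk_union_le _ _)
  exact hle.not_gt (add_lt_of_lt (by simpa using hκ) (hlt p h.1) (hlt (¬p ·) h.2))

lemma Set.PairwiseDisjoint.injOn_of_nonempty_subset {α : Type*} {B : Set (Set α)}
    (hB : B.PairwiseDisjoint id) {s : Set α → Set α} (hs : ∀ a ∈ B, s a ⊆ a)
    (hsne : ∀ a ∈ B, (s a).Nonempty) :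
    InjOn s B := by
  intro a ha b hb hab
  by_contra hne
  obtain ⟨x, hx⟩ := hsne a ha
  exact (hB ha hb hne).le_bot ⟨hs a ha hx, hs b hb (hab ▸ hx)⟩

variable {κ μ θ χ χ' : Cardinal} {c : Ordinal → Ordinal → Ordinal} {i : Ordinal}

lemma WitnessU.exists_subfamily_of_selection (hc : WitnessU κ μ θ χ c) (hχ' : χ' < χ)
    (hi : i < θ.ord) {B : Set (Set Ordinal)} (hBsub : ∀ a ∈ B, a ⊆ Iio κ.ord)
    (hBdisj : B.PairwiseDisjoint id) (hBcard : HasCard B κ) {s : Set Ordinal → Set Ordinal}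
    (hs : ∀ a ∈ B, s a ⊆ a) (hsne : ∀ a ∈ B, (s a).Nonempty)
    (hscard : ∀ a ∈ B, HasCard (s a) χ') :
    ∃ B' ⊆ B, HasCard B' μ ∧
      ∀ a ∈ B', ∀ b ∈ B', SetLT a b → ∀ α ∈ s a, ∀ β ∈ s b, i < c α β := by
  have hinj := hBdisj.injOn_of_nonempty_subset hs hsne
  have hfam : IsDisjFamily κ χ' (s '' B) := by
    refine ⟨?_, ?_, ?_⟩
    · rintro _ ⟨a, ha, rfl⟩
      exact ⟨(hs a ha).trans (hBsub a ha), hscard a ha⟩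
    · rintro _ ⟨a, ha, rfl⟩ _ ⟨b, hb, rfl⟩ hne
      exact (hBdisj ha hb (ne_of_apply_ne s hne)).mono (hs a ha) (hs b hb)
    · exact (mk_image_eq_of_injOn _ _ hinj).trans hBcard
  obtain ⟨C, hCsub, hCcard, hC⟩ := hc.2 χ' hχ' (s '' B) hfam i hi
  have himage : s '' {a ∈ B | s a ∈ C} = C := by
    ext x
    constructor
    · rintro ⟨a, ⟨-, haC⟩, rfl⟩
      exact haC
    · intro hx
      obtain ⟨a, haB, rfl⟩ := hCsub hx
      exact ⟨a, ⟨haB, hx⟩, rfl⟩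
  refine ⟨{a ∈ B | s a ∈ C}, sep_subset _ _, ?_, ?_⟩
  · rw [HasCard, ← mk_image_eq_of_injOn _ _ (hinj.mono (sep_subset _ _)), himage]
    exact hCcard
  · intro a ha b hb hab
    exact hC (s a) ha.2 (s b) hb.2
      (fun x hx y hy => hab x (hs a ha.1 hx) y (hs b hb.1 hy))

lemma WitnessU.exists_subfamily_of_two_choices (hκ : ℵ₀ ≤ κ) (hc : WitnessU κ μ θ 3 c)
    (hi : i < θ.ord) {B : Set (Set Ordinal)} (hBsub : ∀ a ∈ B, a ⊆ Iio κ.ord)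
    (hBdisj : B.PairwiseDisjoint id) (hBcard : HasCard B κ) {f g : Set Ordinal → Ordinal}
    (hf : ∀ a ∈ B, f a ∈ a) (hg : ∀ a ∈ B, g a ∈ a) :
    ∃ B' ⊆ B, HasCard B' μ ∧
      ∀ a ∈ B', ∀ b ∈ B', SetLT a b → i < c (f a) (g b) := by
  rcases hBcard.sep_or_sep_not hκ (fun a => f a = g a) with hcard | hcard
  · obtain ⟨B', hB', hB'card, hB'c⟩ := hc.exists_subfamily_of_selection (χ' := 1)
      (by norm_num) hi (fun a ha => hBsub a ha.1) (hBdisj.subset (sep_subset _ _)) hcard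
      (s := fun a => {f a}) (fun a ha => singleton_subset_iff.mpr (hf a ha.1))
      (fun _ _ => singleton_nonempty _) (fun _ _ => by simp [HasCard])
    refine ⟨B', fun a ha => (hB' ha).1, hB'card, fun a ha b hb hab => ?_⟩
    rw [← (hB' hb).2]
    exact hB'c a ha b hb hab _ rfl _ rfl
  · obtain ⟨B', hB', hB'card, hB'c⟩ := hc.exists_subfamily_of_selection (χ' := 2)
      (by norm_num) hi (fun a ha => hBsub a ha.1) (hBdisj.subset (sep_subset _ _)) hcard
      (s := fun a => {f a, g a}) (fun a ha => pair_subset (hf a ha.1) (hg a ha.1))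
      (fun _ _ => insert_nonempty _ _)
      (fun a ha => by
        rw [HasCard, mk_insert (by simpa using ha.2), mk_singleton]
        norm_num)
    exact ⟨B', fun a ha => (hB' ha).1, hB'card,
      fun a ha b hb hab => hB'c a ha b hb hab _ (Or.inl rfl) _ (Or.inr rfl)⟩

theorem stmt2_general (κ θ : Cardinal) (c : Ordinal → Ordinal → Ordinal)
    (hκunc : ℵ₀ < κ)
    (hc : WitnessU κ κ θ 3 c) :
    WitnessU κ κ θ ℵ₀ c := by
  refine ⟨hc.1, fun χ' hχ' A hA i hi => ?_⟩
  obtain ⟨n, rfl⟩ := lt_aleph0.mp hχ'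
  obtain ⟨hAsets, hAdisj, hAcard⟩ := hA
  choose! E hE using fun a ha => (hAsets a ha).2.exists_range_eq
  have hEmem : ∀ a ∈ A, ∀ j, E a j ∈ a := fun a ha j => (hE a ha).subset (mem_range_self j)
  obtain ⟨B, ⟨hBA, hBcard⟩, hB⟩ := exists_forall_of_refine (ι := Fin n × Fin n)
    (P := fun B => B ⊆ A ∧ HasCard B κ)
    (Q := fun p B => ∀ a ∈ B, ∀ b ∈ B, SetLT a b → i < c (E a p.1) (E b p.2))
    (fun _ _ _ hB'B hQ a ha b hb => hQ a (hB'B ha) b (hB'B hb))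
    (fun p B ⟨hBA, hBcard⟩ => by
      obtain ⟨B', hB'B, hB'card, hB'⟩ := hc.exists_subfamily_of_two_choices hκunc.le hi
        (fun a ha => (hAsets a (hBA ha)).1) (hAdisj.subset hBA) hBcard
        (fun a ha => hEmem a (hBA ha) p.1) (fun a ha => hEmem a (hBA ha) p.2)
      exact ⟨B', hB'B, ⟨hB'B.trans hBA, hB'card⟩, hB'⟩)
    ⟨subset_rfl, hAcard⟩
  refine ⟨B, hBA, hBcard, fun a ha b hb hab α hα β hβ => ?_⟩
  obtain ⟨j, rfl⟩ := (hE a (hBA ha)).symm ▸ hα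
  obtain ⟨k, rfl⟩ := (hE b (hBA hb)).symm ▸ hβ
  exact hB (j, k) a ha b hb hab

theorem stmt2 (κ θ : Cardinal) (c : Ordinal → Ordinal → Ordinal)
    (hκreg : κ.IsRegular) (hκunc : ℵ₀ < κ) (hθκ : θ ≤ κ)
    (hc : WitnessU κ κ θ 3 c) :
    WitnessU κ κ θ ℵ₀ c :=
  stmt2_general κ θ c hκunc hc
end
end

section
/- Suppose that for some cardinal λ, (λ^{<θ})⁺ ≤ κ ≤ λ^θ. Then there exists a coloring c : [κ]² → θ witnessing U(κ, κ, θ, 2) that fails to witness U(κ, 2, θ, 3). -/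
open Cardinal Set Ordinal

noncomputable section

/-!
Colour a pair by the first coordinate where two distinct branches of `^θ λ` differ. Given a
`κ`-family of singletons and `i < θ`, the restrictions of the branches to `i + 1` take at most
`λ ^ |i + 1| ≤ λ^{<θ} < κ` values, so by regularity `κ` of them agree up to `i`, and any two of
them get a colour `> i`. Coordinate `0` of the branch of `α` records the parity of `α`; then in the
family of pairs `{2γ, 2γ + 1}` any two members contain an even and an odd ordinal of colour `0`.
-/

theorem exists_fiber_mk_eq_lift {κ : Cardinal.{0}} (hκ : κ.IsRegular) {X Y : Type 1}
    (hX : #X = lift.{1} κ) (hY : #Y < lift.{1} κ) (ρ : X → Y) :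
    ∃ y, #(ρ ⁻¹' {y}) = lift.{1} κ := by
  have hκ' := hκ.lift.{1}
  obtain ⟨y, hy⟩ := infinite_pigeonhole_card ρ _ hX.ge hκ'.aleph0_le (by rwa [hκ'.cof_ord])
  exact ⟨y, le_antisymm (hX ▸ mk_set_le _) hy⟩

theorem HasCard.subsingleton {α : Type 1} {s : Set α} {χ : Cardinal} (hs : HasCard s χ)
    (hχ : χ < 2) : s.Subsingleton := by
  rw [← mk_le_one_iff_set_subsingleton, hs, lift_le_one_iff, ← not_lt, ← two_le_iff_one_lt]
  exact hχ.not_ge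

theorem SetLT.disjoint {a b : Set Ordinal} (h : SetLT a b) : Disjoint a b :=
  Set.disjoint_left.2 fun x hxa hxb => lt_irrefl x (h x hxa x hxb)

def evenOddPair (γ : Ordinal) : Set Ordinal := {2 * γ, 2 * γ + 1}

theorem setLT_evenOddPair {γ δ : Ordinal} (h : γ < δ) :
    SetLT (evenOddPair γ) (evenOddPair δ) := by
  have hle : ∀ x ∈ evenOddPair γ, x ≤ 2 * γ + 1 := by
    rintro x (rfl | rfl)
    exacts [le_self_add, le_rfl]
  have hge : ∀ y ∈ evenOddPair δ, 2 * δ ≤ y := by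
    rintro y (rfl | rfl)
    exacts [le_rfl, le_self_add]
  intro x hx y hy
  calc x ≤ 2 * γ + 1 := hle x hx
    _ < 2 * γ + 2 := add_lt_add_right (by norm_num) _
    _ = 2 * (γ + 1) := by rw [mul_add, mul_one]
    _ ≤ 2 * δ := mul_le_mul_right (Order.add_one_le_of_lt h) 2
    _ ≤ y := hge y hy

theorem evenOddPair_subset_Iio {κ : Cardinal} (hκ : ℵ₀ ≤ κ) {γ : Ordinal} (hγ : γ < κ.ord) :
    evenOddPair γ ⊆ Iio κ.ord := by
  have h2 : (2 : Ordinal) < κ.ord :=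
    lt_ord.2 (by simpa using (natCast_lt_aleph0 (n := 2)).trans_le hκ)
  have h : 2 * γ < κ.ord := isPrincipal_mul_ord hκ h2 hγ
  rintro x (rfl | rfl)
  exacts [h, isPrincipal_add_ord hκ h ((by norm_num : (1 : Ordinal) < 2).trans h2)]

theorem hasCard_evenOddPair (γ : Ordinal) : HasCard (evenOddPair γ) 2 := by
  rw [HasCard, evenOddPair, mk_insert (by simp), mk_singleton]
  norm_num

theorem isDisjFamily_evenOddPair {κ : Cardinal} (hκ : ℵ₀ ≤ κ) :
    IsDisjFamily κ 2 (evenOddPair '' Iio κ.ord) := by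
  have hinj : Function.Injective evenOddPair := .of_lt_imp_ne fun γ δ h heq =>
    (setLT_evenOddPair h).disjoint.ne (insert_nonempty _ _).ne_empty heq
  refine ⟨?_, ?_, ?_⟩
  · rintro _ ⟨γ, hγ, rfl⟩
    exact ⟨evenOddPair_subset_Iio hκ hγ, hasCard_evenOddPair γ⟩
  · rintro _ ⟨γ, -, rfl⟩ _ ⟨δ, -, rfl⟩ hne
    rcases lt_or_gt_of_ne (ne_of_apply_ne _ hne) with h | h
    exacts [(setLT_evenOddPair h).disjoint, (setLT_evenOddPair h).disjoint.symm]
  · rw [HasCard, mk_image_eq hinj, Cardinal.mk_Iio_ordinal, card_ord]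

section FirstDifference

variable {V : Type} {κ θ : Cardinal}

-- Junk value `0` when `f α = f β`; `Separates` rules this out for `α ≠ β` below `κ`.
def firstDiff (f : Ordinal → Ordinal → V) (α β : Ordinal) : Ordinal :=
  sInf {i | f α i ≠ f β i}

def Separates (κ θ : Cardinal) (f : Ordinal → Ordinal → V) : Prop :=
  ∀ α < κ.ord, ∀ β < κ.ord, α ≠ β → ∃ i < θ.ord, f α i ≠ f β i

variable {f : Ordinal → Ordinal → V} {α β i : Ordinal}

theorem firstDiff_le (h : f α i ≠ f β i) : firstDiff f α β ≤ i := csInf_le' h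

theorem lt_firstDiff {j : Ordinal} (hne : f α j ≠ f β j) (heq : ∀ k ≤ i, f α k = f β k) :
    i < firstDiff f α β :=
  not_le.1 fun hle => (csInf_mem (s := {i | f α i ≠ f β i}) ⟨j, hne⟩) (heq _ hle)

theorem isColoring_firstDiff (hf : Separates κ θ f) : IsColoring κ θ (firstDiff f) := by
  intro α β hαβ hβ
  obtain ⟨i, hi, hne⟩ := hf α (hαβ.trans hβ) β hβ hαβ.ne
  exact (firstDiff_le hne).trans_lt hi

theorem witnessU_two_firstDiff (hκ : κ.IsRegular) (hf : Separates κ θ f)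
    (hsmall : ∀ i < θ.ord, #(Iic i → V) < lift.{1} κ) : WitnessU κ κ θ 2 (firstDiff f) := by
  refine ⟨isColoring_firstDiff hf, ?_⟩
  rintro χ' hχ' A ⟨hA, -, hAκ⟩ i hi
  have hpt : ∀ a ∈ A, ∀ α ∈ a, α = sInf a := fun a ha α hα =>
    ((hA a ha).2.subsingleton hχ') hα (csInf_mem ⟨α, hα⟩)
  let ρ : A → Iic i → V := fun a j => f (sInf a.1) j
  obtain ⟨g, hg⟩ := exists_fiber_mk_eq_lift hκ hAκ (hsmall i hi) ρ
  refine ⟨Subtype.val '' (ρ ⁻¹' {g}), image_subset_iff.2 fun a _ => a.2, ?_, ?_⟩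
  · rwa [HasCard, mk_image_eq Subtype.val_injective]
  rintro _ ⟨a, ha, rfl⟩ _ ⟨b, hb, rfl⟩ hab α hα β hβ
  have hαβ := hab α hα β hβ
  obtain ⟨k, -, hk⟩ := hf α ((hA a a.2).1 hα) β ((hA b b.2).1 hβ) hαβ.ne
  refine lt_firstDiff hk fun j hj => ?_
  rw [hpt a a.2 α hα, hpt b b.2 β hβ]
  exact congrFun (ha.trans hb.symm) ⟨j, hj⟩

theorem not_witnessU_three_firstDiff (hκ : ℵ₀ ≤ κ) (hθ : θ ≠ 0)
    (hf : ∀ γ δ, f (2 * γ) 0 ≠ f (2 * δ + 1) 0) :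
    ¬ WitnessU κ 2 θ 3 (firstDiff f) := by
  rintro ⟨-, hU⟩
  obtain ⟨B, hBA, hB, hhom⟩ :=
    hU 2 (by norm_num) _ (isDisjFamily_evenOddPair hκ) 0 (by simpa [pos_iff_ne_zero] using hθ)
  have hlt : ∀ γ δ, evenOddPair γ ∈ B → evenOddPair δ ∈ B → ¬ γ < δ := fun γ δ hγ hδ h =>
    (firstDiff_le (hf γ δ)).not_gt <| hhom _ hγ _ hδ (setLT_evenOddPair h) _
      (mem_insert _ _) _ (mem_insert_of_mem _ rfl)
  obtain ⟨⟨_, hx⟩, ⟨_, hy⟩, hxy⟩ := two_le_iff.1 (by rw [hB]; norm_num : (2 : Cardinal) ≤ #B)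
  obtain ⟨γ, -, rfl⟩ := hBA hx
  obtain ⟨δ, -, rfl⟩ := hBA hy
  exact hxy (Subtype.ext (congrArg evenOddPair
    ((not_lt.1 (hlt δ γ hy hx)).antisymm (not_lt.1 (hlt γ δ hx hy)))))

end FirstDifference

section Construction

variable {V : Type} {κ θ : Cardinal}

def prependParity (v₀ v₁ : V) (g : Ordinal → Ordinal → V) (α i : Ordinal) : V :=
  if i = 0 then (if α % 2 = 0 then v₀ else v₁) else g α (i - 1)

theorem prependParity_even_ne_odd {v₀ v₁ : V} (hv : v₀ ≠ v₁) (g : Ordinal → Ordinal → V)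
    (γ δ : Ordinal) : prependParity v₀ v₁ g (2 * γ) 0 ≠ prependParity v₀ v₁ g (2 * δ + 1) 0 := by
  simpa [prependParity, Ordinal.mul_mod, Ordinal.mul_add_mod_self, Ordinal.mod_eq_of_lt] using hv

theorem Separates.prependParity (hθ : ℵ₀ ≤ θ) {g : Ordinal → Ordinal → V}
    (hg : Separates κ θ g) (v₀ v₁ : V) : Separates κ θ (prependParity v₀ v₁ g) := by
  intro α hα β hβ hne
  obtain ⟨j, hj, hgj⟩ := hg α hα β hβ hne
  have h1 : (1 : Ordinal) < θ.ord := lt_ord.2 (by simpa using one_lt_aleph0.trans_le hθ)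
  refine ⟨1 + j, isPrincipal_add_ord hθ h1 hj, ?_⟩
  have hpos : 1 + j ≠ 0 := (zero_lt_one.trans_le le_self_add).ne'
  simpa [_root_.prependParity, hpos, Ordinal.add_sub_cancel] using hgj

theorem exists_separates [Nonempty V] (h : κ ≤ #V ^ θ) :
    ∃ g : Ordinal → Ordinal → V, Separates κ θ g := by
  have hmk : #(Iio κ.ord) ≤ #(Iio θ.ord → V) := by
    rw [mk_arrow, Cardinal.mk_Iio_ordinal, Cardinal.mk_Iio_ordinal, card_ord, card_ord,
      Cardinal.lift_id', ← lift_power, Cardinal.lift_le]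
    exact h
  obtain ⟨E⟩ := hmk
  refine ⟨fun α i => if h : α < κ.ord ∧ i < θ.ord then E ⟨α, h.1⟩ ⟨i, h.2⟩
    else Classical.arbitrary V, fun α hα β hβ hne => ?_⟩
  have hEne : E ⟨α, hα⟩ ≠ E ⟨β, hβ⟩ := E.injective.ne fun h => hne (congrArg Subtype.val h)
  obtain ⟨⟨j, hj : j < θ.ord⟩, hE⟩ := Function.ne_iff.1 hEne
  exact ⟨j, hj, by simpa [hα, hβ, hj] using hE⟩

theorem mk_Iic_arrow_lt (hθ : ℵ₀ ≤ θ) (h : #V ^< θ < κ) {i : Ordinal} (hi : i < θ.ord) :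
    #(Iic i → V) < lift.{1} κ := by
  rw [mk_arrow, ← Order.Iio_succ, Cardinal.mk_Iio_ordinal, Cardinal.lift_lift, ← lift_power,
    Cardinal.lift_lt]
  refine (le_powerlt _ ?_).trans_lt h
  rw [← lt_ord]
  exact (isSuccLimit_ord hθ).succ_lt hi

theorem one_lt_of_le_power (hκ : ℵ₀ ≤ κ) (h : κ ≤ #V ^ θ) : 1 < #V := by
  by_contra! hV
  have := h.trans ((power_le_power_right hV).trans_eq one_power)
  exact (one_lt_aleph0.trans_le hκ).not_ge this

end Construction

theorem stmt3_general (κ θ lam : Cardinal)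
    (hκreg : κ.IsRegular)
    (hθreg : θ.IsRegular)
    (h1 : Order.succ (Cardinal.powerlt lam θ) ≤ κ) (h2 : κ ≤ lam ^ θ) :
    ∃ c : Ordinal → Ordinal → Ordinal,
      WitnessU κ κ θ 2 c ∧ ¬ WitnessU κ 2 θ 3 c := by
  rw [← mk_out lam] at h1 h2
  have : Nontrivial lam.out := one_lt_iff_nontrivial.1 (one_lt_of_le_power hκreg.aleph0_le h2)
  obtain ⟨v₀, v₁, hv⟩ := exists_pair_ne lam.out
  obtain ⟨g, hg⟩ := exists_separates h2
  refine ⟨firstDiff (prependParity v₀ v₁ g), ?_, ?_⟩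
  · exact witnessU_two_firstDiff hκreg (hg.prependParity hθreg.aleph0_le v₀ v₁)
      fun i hi => mk_Iic_arrow_lt hθreg.aleph0_le (Order.succ_le_iff.1 h1) hi
  · exact not_witnessU_three_firstDiff hκreg.aleph0_le hθreg.ne_zero
      (prependParity_even_ne_odd hv g)

theorem stmt3 (κ θ lam : Cardinal)
    (hκreg : κ.IsRegular) (hκunc : ℵ₀ < κ)
    (hθreg : θ.IsRegular)
    (h1 : Order.succ (Cardinal.powerlt lam θ) ≤ κ) (h2 : κ ≤ lam ^ θ) :
    ∃ c : Ordinal → Ordinal → Ordinal,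
      WitnessU κ κ θ 2 c ∧ ¬ WitnessU κ 2 θ 3 c :=
  stmt3_general κ θ lam hκreg hθreg h1 h2
end
end

section
/- If θ < κ and c : [κ]² → θ witnesses U(κ, 2, θ, 2), then the tree T(c) := {c(·,γ)↾β : β ≤ γ < κ}, ordered by function extension, admits no cofinal branch; that is, there is no function b : κ → θ with b↾β ∈ T(c) for all β < κ. -/
open Cardinal Set Ordinal

noncomputable section

/-- `D` is a club in (the ordinal) `o`: a closed and unbounded subset of `o`. -/
def IsClub' (D : Set Ordinal) (o : Ordinal) : Prop :=
  D ⊆ Set.Iio o ∧ (∀ α < o, ∃ β ∈ D, α ≤ β) ∧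
    ∀ γ < o, 0 < γ → (∀ x < γ, ∃ β ∈ D, x < β ∧ β < γ) → γ ∈ D

/-- `S` is stationary in `o`: it meets every club in `o`. -/
def IsStationary' (S : Set Ordinal) (o : Ordinal) : Prop :=
  ∀ D, IsClub' D o → (S ∩ D).Nonempty

/-!
A cofinal branch `b` yields, by a recursion of length `κ`, a set `X ⊆ κ` of size `κ` with
`c(α, β) = b(α)` for all `α < β` in `X`: the next point `γ` is taken with `c(·, γ)` agreeing with
`b` below the supremum of the earlier points, and regularity keeps these suprema below `κ`.
As `θ < κ`, `b` is constant, say `i`, on some `Y ⊆ X` of size `κ`, so every pair from `Y` has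
color `i`, contradicting `U(κ, 2, θ, 2)`.
-/

universe u

theorem Cardinal.IsRegular.exists_seq_above_prev {κ : Cardinal.{u}} (hκ : κ.IsRegular)
    (P : Ordinal.{u} → Ordinal.{u} → Prop)
    (hP : ∀ β < κ.ord, ∃ γ, β ≤ γ ∧ γ < κ.ord ∧ P β γ) :
    ∃ e : Ordinal.{u} → Ordinal.{u}, ∀ ξ < κ.ord, e ξ < κ.ord ∧
      ∃ β, (∀ η < ξ, e η < β) ∧ β ≤ e ξ ∧ P β (e ξ) := by
  choose! g hg using hP
  let e : Ordinal.{u} → Ordinal.{u} :=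
    WellFoundedLT.fix fun ξ ih => g (⨆ η : Iio ξ, ih η.1 η.2 + 1)
  have he ξ : e ξ = g (⨆ η : Iio ξ, e η + 1) := WellFoundedLT.fix_eq _ ξ
  have hsup : ∀ ξ < κ.ord, ⨆ η : Iio ξ, e η + 1 < κ.ord := by
    intro ξ hξ
    induction ξ using WellFoundedLT.induction with
    | _ ξ ih =>
      apply Ordinal.lift_iSup_add_one_lt_of_lt_cof
      · rw [Cardinal.mk_Iio_ordinal, ← Ordinal.lift_cof, hκ.cof_ord]
        simpa [Cardinal.lt_ord, ← Ordinal.lift_card] using hξ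
      · rintro ⟨η, hη⟩
        rw [he]
        exact (hg _ (ih η hη (hη.trans hξ))).2.1
  refine ⟨e, fun ξ hξ => ?_⟩
  obtain ⟨hle, hlt, hP⟩ := hg _ (hsup ξ hξ)
  rw [he]
  exact ⟨hlt, _, fun η hη => Ordinal.lt_iSup_add_one (fun η : Iio ξ => e η) ⟨η, hη⟩, hle, hP⟩

theorem Cardinal.IsRegular.exists_subset_card_eq_forall_eq {κ θ : Cardinal.{u}}
    (hκ : κ.IsRegular) (hθκ : θ < κ) {X : Set Ordinal.{u}} (hX : #X = Cardinal.lift.{u + 1} κ)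
    {f : Ordinal.{u} → Ordinal.{u}} (hf : ∀ x ∈ X, f x < θ.ord) :
    ∃ i < θ.ord, ∃ Y ⊆ X, #Y = Cardinal.lift.{u + 1} κ ∧ ∀ x ∈ Y, f x = i := by
  have hℵ₀ : ℵ₀ ≤ Cardinal.lift.{u + 1} κ := aleph0_le_lift.2 hκ.aleph0_le
  have hθ : #(Iio θ.ord) < (Cardinal.lift.{u + 1} κ).ord.cof := by
    rw [Cardinal.mk_Iio_ordinal, card_ord, ← lift_ord, ← Ordinal.lift_cof, hκ.cof_ord]
    exact lift_lt.2 hθκ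
  obtain ⟨⟨i, hi⟩, Y, hYX, hY, hYf⟩ :=
    infinite_pigeonhole_set (fun x : X => (⟨f x, hf x x.2⟩ : Iio θ.ord)) _ hX.ge hℵ₀ hθ
  exact ⟨i, hi, Y, hYX, ((mk_le_mk_of_subset hYX).trans hX.le).antisymm hY,
    fun x hx => congrArg Subtype.val (hYf hx)⟩

/-- `b` is a cofinal branch of the tree `T(c)`: every `b ↾ β` with `β < κ` is some `c(·, γ) ↾ β`. -/
def IsCofinalBranch (κ : Cardinal.{u}) (c : Ordinal.{u} → Ordinal.{u} → Ordinal.{u})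
    (b : Ordinal.{u} → Ordinal.{u}) : Prop :=
  ∀ β < κ.ord, ∃ γ, β ≤ γ ∧ γ < κ.ord ∧ ∀ α < β, b α = c α γ

namespace IsCofinalBranch

variable {κ θ : Cardinal.{u}} {c : Ordinal.{u} → Ordinal.{u} → Ordinal.{u}}
  {b : Ordinal.{u} → Ordinal.{u}}

theorem lt_ord_of_isColoring (hb : IsCofinalBranch κ c b) (hκ : ℵ₀ ≤ κ)
    (hc : IsColoring κ θ c) {α : Ordinal.{u}} (hα : α < κ.ord) : b α < θ.ord := by
  obtain ⟨γ, hαγ, hγ, hbγ⟩ := hb (α + 1) ((isSuccLimit_ord hκ).add_one_lt hα)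
  rw [hbγ α (lt_add_one α)]
  exact hc α γ ((lt_add_one α).trans_le hαγ) hγ

theorem exists_coherent_set (hb : IsCofinalBranch κ c b) (hκ : κ.IsRegular) :
    ∃ X ⊆ Iio κ.ord, #X = Cardinal.lift.{u + 1} κ ∧ ∀ α ∈ X, ∀ β ∈ X, α < β → c α β = b α := by
  obtain ⟨e, he⟩ := hκ.exists_seq_above_prev _ hb
  have hstep : ∀ ξ < κ.ord, ∀ η < ξ, e η < e ξ ∧ c (e η) (e ξ) = b (e η) := by
    intro ξ hξ η hη
    obtain ⟨-, β, hβ, hβξ, hbβ⟩ := he ξ hξ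
    exact ⟨(hβ η hη).trans_le hβξ, (hbβ _ (hβ η hη)).symm⟩
  have hmono : StrictMonoOn e (Iio κ.ord) := fun η _ ξ hξ hηξ => (hstep ξ hξ η hηξ).1
  refine ⟨e '' Iio κ.ord, ?_, ?_, ?_⟩
  · rintro _ ⟨ξ, hξ, rfl⟩
    exact (he ξ hξ).1
  · rw [mk_image_eq_of_injOn _ _ hmono.injOn, Cardinal.mk_Iio_ordinal, card_ord]
  · rintro _ ⟨η, hη, rfl⟩ _ ⟨ξ, hξ, rfl⟩ hηξ
    exact (hstep ξ hξ η ((hmono.lt_iff_lt hη hξ).1 hηξ)).2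

end IsCofinalBranch

theorem isDisjFamily_image_singleton {κ : Cardinal} {X : Set Ordinal} (hXκ : X ⊆ Iio κ.ord)
    (hX : #X = lift κ) : IsDisjFamily κ 1 ((fun x => ({x} : Set Ordinal)) '' X) := by
  refine ⟨?_, ?_, ?_⟩
  · rintro _ ⟨x, hx, rfl⟩
    exact ⟨singleton_subset_iff.2 (hXκ hx), by simp [HasCard]⟩
  · rintro _ ⟨x, -, rfl⟩ _ ⟨y, -, rfl⟩ hxy
    exact disjoint_singleton.2 fun h => hxy (h ▸ rfl)
  · rw [HasCard, mk_image_eq singleton_injective, hX]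

theorem WitnessU.exists_lt_apply {κ μ θ χ : Cardinal} {c : Ordinal → Ordinal → Ordinal}
    (hc : WitnessU κ μ θ χ c) (hμ : 1 < μ) (hχ : 1 < χ) {X : Set Ordinal}
    (hXκ : X ⊆ Iio κ.ord) (hX : #X = lift κ) {i : Ordinal} (hi : i < θ.ord) :
    ∃ α ∈ X, ∃ β ∈ X, α < β ∧ i < c α β := by
  obtain ⟨B, hBA, hBμ, hB⟩ := hc.2 1 hχ _ (isDisjFamily_image_singleton hXκ hX) i hi
  have : Nontrivial B := by
    rw [← one_lt_iff_nontrivial, hBμ]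
    exact one_lt_lift_iff.2 hμ
  obtain ⟨⟨_, hs⟩, ⟨_, ht⟩, hst⟩ := exists_pair_ne B
  obtain ⟨x, hx, rfl⟩ := hBA hs
  obtain ⟨y, hy, rfl⟩ := hBA ht
  have hcolor {p q : Ordinal} (hp : {p} ∈ B) (hq : {q} ∈ B) (hpq : p < q) : i < c p q :=
    hB _ hp _ hq (by simpa [SetLT] using hpq) p rfl q rfl
  rcases lt_or_gt_of_ne fun h : x = y => hst (by subst h; rfl) with h | h
  · exact ⟨x, hx, y, hy, h, hcolor hs ht h⟩
  · exact ⟨y, hy, x, hx, h, hcolor ht hs h⟩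

theorem stmt4_general (κ θ : Cardinal) (c : Ordinal → Ordinal → Ordinal)
    (hκreg : κ.IsRegular) (hθκ : θ < κ)
    (hc : WitnessU κ 2 θ 2 c) :
    ¬ ∃ b : Ordinal → Ordinal, ∀ β < κ.ord, ∃ γ, β ≤ γ ∧ γ < κ.ord ∧
      ∀ α < β, b α = c α γ := by
  rintro ⟨b, hb : IsCofinalBranch κ c b⟩
  obtain ⟨X, hXκ, hX, hXc⟩ := hb.exists_coherent_set hκreg
  obtain ⟨i, hi, Y, hYX, hY, hYi⟩ := hκreg.exists_subset_card_eq_forall_eq hθκ hX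
    fun α hα => hb.lt_ord_of_isColoring hκreg.aleph0_le hc.1 (hXκ hα)
  obtain ⟨α, hα, β, hβ, hαβ, hlt⟩ :=
    hc.exists_lt_apply one_lt_two one_lt_two (hYX.trans hXκ) hY hi
  rw [hXc α (hYX hα) β (hYX hβ) hαβ, hYi α hα] at hlt
  exact hlt.false

theorem stmt4 (κ θ : Cardinal) (c : Ordinal → Ordinal → Ordinal)
    (hκreg : κ.IsRegular) (hκunc : ℵ₀ < κ) (hθκ : θ < κ)
    (hc : WitnessU κ 2 θ 2 c) :
    ¬ ∃ b : Ordinal → Ordinal, ∀ β < κ.ord, ∃ γ, β ≤ γ ∧ γ < κ.ord ∧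
      ∀ α < β, b α = c α γ :=
  stmt4_general κ θ c hκreg hθκ hc
end
end

section
/- If κ is a weakly compact cardinal, then U(κ, 2, θ, 2) fails for every infinite regular θ < κ; that is, for every coloring c : [κ]² → θ there is A ∈ [κ]^κ and i < θ such that c(α,β) ≤ i for all α < β in A. -/
open Cardinal Set Ordinal

noncomputable section

/-- `κ` is weakly compact: strongly inaccessible, and every 2-coloring of pairs of
ordinals below `κ` admits a homogeneous set of size `κ`. -/
def IsWeaklyCompact (κ : Cardinal) : Prop :=
  κ.IsInaccessible ∧
    ∀ f : Ordinal → Ordinal → Bool, ∃ H : Set Ordinal, H ⊆ Set.Iio κ.ord ∧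
      HasCard H κ ∧ ∃ b : Bool, ∀ α ∈ H, ∀ β ∈ H, α < β → f α β = b

/-!
The lexicographic order on the columns `c (·, γ)` gives a 2-coloring of pairs; a homogeneous set `H`
of size `κ` makes `γ ↦ c (·, γ)` monotone or antitone on `H`. Lexicographic intervals are convex for
agreement below a fixed `α`, and there are fewer than `κ` possible restrictions to `α` (`κ` is a
strong limit), so by pigeonhole all columns in `H` above some point agree below `α`. This yields a
cofinal branch `v ξ` of the tree `T(c)`. Pigeonholing `v` on `H` fixes a colour `i`, and thinning
out to a sparse subset, in which each element is above the stabilisation point of all earlier ones,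
gives `c (γ, γ') = v γ = i` for all `γ < γ'` in the subset.
-/

theorem Pi.eqOn_Iio_of_toLex_le_of_le {ι β : Type*} [LinearOrder ι] [WellFoundedLT ι]
    [LinearOrder β] {x y z : ι → β} {a : ι} (hxy : toLex x ≤ toLex y) (hyz : toLex y ≤ toLex z)
    (hxz : EqOn x z (Iio a)) : EqOn x y (Iio a) := by
  intro j
  induction j using WellFoundedLT.induction with
  | _ j ih =>
    intro hj
    have hlow : ∀ k < j, x k = y k := fun k hk => ih k hk (hk.trans hj)
    refine le_antisymm (Pi.apply_le_of_toLex hxy hlow) ?_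
    rw [hxz hj]
    exact Pi.apply_le_of_toLex hyz fun k hk => (hlow k hk).symm.trans (hxz (hk.trans hj))

theorem monotoneOn_or_antitoneOn_of_lt_iff {α β : Type*} [PartialOrder α] [LinearOrder β]
    {f : α → β} {s : Set α} {P : Prop} (hf : ∀ x ∈ s, ∀ y ∈ s, x < y → (f x < f y ↔ P)) :
    MonotoneOn f s ∨ AntitoneOn f s := by
  by_cases hP : P
  · refine Or.inl fun x hx y hy hxy => ?_
    rcases hxy.eq_or_lt with rfl | hlt
    · exact le_rfl
    · exact ((hf x hx y hy hlt).2 hP).le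
  · refine Or.inr fun x hx y hy hxy => ?_
    rcases hxy.eq_or_lt with rfl | hlt
    · exact le_rfl
    · exact not_lt.1 fun h => hP ((hf x hx y hy hlt).1 h)

theorem eqOn_Iio_of_monotoneOn_or_antitoneOn {α ι β : Type*} [Preorder α] [LinearOrder ι]
    [WellFoundedLT ι] [LinearOrder β] {F : α → ι → β} {s : Set α}
    (hF : MonotoneOn (fun x => toLex (F x)) s ∨ AntitoneOn (fun x => toLex (F x)) s)
    {x y z : α} (hx : x ∈ s) (hy : y ∈ s) (hz : z ∈ s) (hxy : x ≤ y) (hyz : y ≤ z) {a : ι}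
    (hxz : EqOn (F x) (F z) (Iio a)) : EqOn (F x) (F y) (Iio a) := by
  rcases hF with hF | hF
  · exact Pi.eqOn_Iio_of_toLex_le_of_le (hF hx hy hxy) (hF hy hz hyz) hxz
  · exact hxz.trans (Pi.eqOn_Iio_of_toLex_le_of_le (hF hy hz hyz) (hF hx hy hxy) hxz.symm)

theorem Cardinal.IsStrongLimit.power_lt {a b c : Cardinal} (hc : c.IsStrongLimit) (ha : a < c)
    (hb : b < c) : a ^ b < c :=
  calc a ^ b ≤ (2 ^ a) ^ b := power_le_power_right (cantor a).le
    _ = 2 ^ (a * b) := power_mul.symm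
    _ < c := hc.isStrongPrelimit (mul_lt_of_lt hc.aleph0_le ha hb)

universe u

def IsCofinalIn (X : Set Ordinal.{u}) (o : Ordinal.{u}) : Prop := ∀ ζ < o, ∃ γ ∈ X, ζ ≤ γ

section Cofinal

variable {κ : Cardinal.{u}} {X : Set Ordinal.{u}}

theorem isCofinalIn_of_lift_le_mk (hX : lift.{u + 1} κ ≤ #X) : IsCofinalIn X κ.ord := by
  intro ζ hζ
  by_contra! hbdd
  have : #X < lift.{u + 1} κ :=
    calc #X ≤ #(Iio ζ) := mk_le_mk_of_subset fun γ hγ => hbdd γ hγ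
      _ = lift.{u + 1} ζ.card := Cardinal.mk_Iio_ordinal ζ
      _ < lift.{u + 1} κ := lift_lt.2 (lt_ord.1 hζ)
  exact this.not_ge hX

namespace IsCofinalIn

theorem lift_le_mk (hX : IsCofinalIn X κ.ord) (hκ : κ.IsRegular) (hXκ : X ⊆ Iio κ.ord) :
    lift.{u + 1} κ ≤ #X := by
  by_contra! hsmall
  have hsup : sSup X < κ.ord :=
    sSup_lt_of_lt_cof (by rwa [← Ordinal.lift_cof, hκ.cof_ord]) hXκ
  obtain ⟨γ, hγ, hle⟩ := hX _ ((isSuccLimit_ord hκ.aleph0_le).succ_lt hsup)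
  have hbdd : BddAbove X := ⟨κ.ord, fun γ hγ => (hXκ hγ).le⟩
  exact (Order.lt_succ (sSup X)).not_ge (hle.trans (le_csSup hbdd hγ))

theorem exists_subset_eq_const {β : Type (u + 1)} (hX : IsCofinalIn X κ.ord) (hκ : κ.IsRegular)
    (hXκ : X ⊆ Iio κ.ord) {f : Ordinal.{u} → β} {R : Set β} (hR : #R < lift.{u + 1} κ)
    (hf : MapsTo f X R) : ∃ Y ⊆ X, IsCofinalIn Y κ.ord ∧ ∃ r ∈ R, ∀ y ∈ Y, f y = r := by
  obtain ⟨r, Y, hYX, hY, hfY⟩ := infinite_pigeonhole_set (fun x : X => (⟨f x, hf x.2⟩ : R))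
    (lift.{u + 1} κ) (hX.lift_le_mk hκ hXκ) (by simpa using hκ.aleph0_le)
    (by rwa [hκ.lift.cof_ord])
  exact ⟨Y, hYX, isCofinalIn_of_lift_le_mk hY, r, r.2, fun y hy => congrArg Subtype.val (hfY hy)⟩

end IsCofinalIn

theorem isCofinalIn_closurePoints (hκ : κ.IsRegular) (hκ₀ : κ ≠ ℵ₀) {g : Ordinal.{u} → Ordinal.{u}}
    (hg : ∀ x < κ.ord, g x < κ.ord) :
    IsCofinalIn {δ | δ < κ.ord ∧ ∀ x < δ, g x < δ} κ.ord := by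
  set G : Ordinal.{u} → Ordinal.{u} := fun y => ⨆ x : Iio y, g x + 1
  have hG : ∀ y < κ.ord, G y < κ.ord := fun y hy =>
    lift_iSup_add_one_lt_of_lt_cof
      (by
        rw [Cardinal.mk_Iio_ordinal, ← Ordinal.lift_cof, hκ.cof_ord]
        simpa [← Ordinal.lift_card] using lt_ord.1 hy)
      fun x => hg x (x.2.trans hy)
  intro ζ hζ
  refine ⟨nfp G ζ, ⟨nfp_lt_ord_of_isRegular hκ hκ₀ hG hζ, fun x hx => ?_⟩, le_nfp G ζ⟩
  obtain ⟨n, hn⟩ := lt_nfp_iff.1 hx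
  calc g x < g x + 1 := Order.lt_add_one_iff.2 le_rfl
    _ ≤ G (G^[n] ζ) := Ordinal.le_iSup (fun x : Iio (G^[n] ζ) => g x + 1) ⟨x, hn⟩
    _ = G^[n + 1] ζ := (Function.iterate_succ_apply' G n ζ).symm
    _ ≤ nfp G ζ := iterate_le_nfp G ζ (n + 1)

theorem IsCofinalIn.exists_sparse_subset (hX : IsCofinalIn X κ.ord) (hκ : κ.IsRegular)
    (hκ₀ : κ ≠ ℵ₀) {g : Ordinal.{u} → Ordinal.{u}}
    (hg : ∀ x < κ.ord, g x < κ.ord) :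
    ∃ Y ⊆ X, IsCofinalIn Y κ.ord ∧ ∀ γ ∈ Y, ∀ γ' ∈ Y, γ < γ' → g γ ≤ γ' := by
  have hne : ∀ δ < κ.ord, (X ∩ Ici δ).Nonempty := fun δ hδ =>
    let ⟨γ, hγ, hδγ⟩ := hX δ hδ; ⟨γ, hγ, hδγ⟩
  set C := {δ | δ < κ.ord ∧ ∀ x < δ, g x < δ}
  refine ⟨(fun δ => sInf (X ∩ Ici δ)) '' C, ?_, ?_, ?_⟩
  · rintro _ ⟨δ, hδ, rfl⟩
    exact (csInf_mem (hne δ hδ.1)).1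
  · intro ζ hζ
    obtain ⟨δ, hδ, hζδ⟩ := isCofinalIn_closurePoints hκ hκ₀ hg ζ hζ
    exact ⟨_, ⟨δ, hδ, rfl⟩, hζδ.trans (csInf_mem (hne δ hδ.1)).2⟩
  · rintro _ ⟨δ, hδ, rfl⟩ _ ⟨δ', hδ', rfl⟩ hlt
    have hmem := csInf_mem (hne δ hδ.1)
    -- otherwise it would lie in `X ∩ Ici δ'`, below the minimum of that set
    have hδ'γ : sInf (X ∩ Ici δ) < δ' :=
      not_le.1 fun h => hlt.not_ge (csInf_le' ⟨hmem.1, h⟩)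
    exact ((hδ'.2 _ hδ'γ).le).trans (csInf_mem (hne δ' hδ'.1)).2

end Cofinal

theorem IsCofinalIn.hasCard {κ : Cardinal.{0}} {X : Set Ordinal.{0}} (hX : IsCofinalIn X κ.ord)
    (hκ : κ.IsRegular) (hXκ : X ⊆ Iio κ.ord) : HasCard X κ := by
  refine le_antisymm ?_ (hX.lift_le_mk hκ hXκ)
  calc #X ≤ #(Iio κ.ord) := mk_le_mk_of_subset hXκ
    _ = lift κ := by rw [Cardinal.mk_Iio_ordinal, card_ord]

theorem IsColoring.exists_eqOn_Iio {κ θ : Cardinal.{u}} {c : Ordinal.{u} → Ordinal → Ordinal}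
    (hc : IsColoring κ θ c) (hκ : κ.IsRegular) (hκs : κ.IsStrongLimit) (hθκ : θ < κ)
    {H : Set Ordinal.{u}} (hH : IsCofinalIn H κ.ord) (hHκ : H ⊆ Iio κ.ord)
    (hlex : MonotoneOn (fun γ => toLex (c · γ)) H ∨ AntitoneOn (fun γ => toLex (c · γ)) H)
    {α : Ordinal.{u}} (hα : α < κ.ord) :
    ∃ m ∈ H, α ≤ m ∧ ∀ γ ∈ H, m ≤ γ → EqOn (c · γ) (c · m) (Iio α) := by
  have hS : IsCofinalIn (H ∩ Ici α) κ.ord := fun ζ hζ =>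
    let ⟨γ, hγ, hle⟩ := hH _ (max_lt hζ hα)
    ⟨γ, ⟨hγ, le_of_max_le_right hle⟩, le_of_max_le_left hle⟩
  set R := range fun h : Iio α → Iio θ.ord => fun ξ => (h ξ : Ordinal)
  have hR : #R < lift.{u + 1} κ :=
    calc #R ≤ #(Iio α → Iio θ.ord) := mk_range_le
      _ = lift (θ ^ α.card) := by
        rw [← power_def, Cardinal.mk_Iio_ordinal, Cardinal.mk_Iio_ordinal, card_ord, lift_power]
      _ < lift κ := lift_lt.2 (hκs.power_lt hθκ (lt_ord.1 hα))
  have hmaps : MapsTo (fun γ (ξ : Iio α) => c ξ γ) (H ∩ Ici α) R := fun γ hγ =>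
    ⟨fun ξ => ⟨c ξ γ, hc _ _ (ξ.2.trans_le hγ.2) (hHκ hγ.1)⟩, rfl⟩
  obtain ⟨G, hGS, hG, r, -, hr⟩ :=
    hS.exists_subset_eq_const hκ (inter_subset_left.trans hHκ) hR hmaps
  obtain ⟨m, hmG, -⟩ := hG 0 hκ.ord_pos
  refine ⟨m, (hGS hmG).1, (hGS hmG).2, fun γ hγ hmγ => ?_⟩
  obtain ⟨m', hm'G, hγm'⟩ := hG γ (hHκ hγ)
  have hmm' : EqOn (c · m) (c · m') (Iio α) := fun ξ hξ =>
    congrFun ((hr m hmG).trans (hr m' hm'G).symm) ⟨ξ, hξ⟩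
  exact (eqOn_Iio_of_monotoneOn_or_antitoneOn hlex (hGS hmG).1 hγ (hGS hm'G).1 hmγ hγm' hmm').symm

theorem stmt5_general (κ θ : Cardinal) (hκ : IsWeaklyCompact κ)
    (hθκ : θ < κ)
    (c : Ordinal → Ordinal → Ordinal) (hc : IsColoring κ θ c) :
    ∃ A ⊆ Set.Iio κ.ord, HasCard A κ ∧ ∃ i < θ.ord,
      ∀ α ∈ A, ∀ β ∈ A, α < β → c α β ≤ i := by
  classical
  obtain ⟨hκi, hpart⟩ := hκ
  have hκr := hκi.isRegular
  have hlim := isSuccLimit_ord hκr.aleph0_le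
  obtain ⟨H, hHκ, hHcard, b, hb⟩ := hpart fun γ γ' => decide (toLex (c · γ) < toLex (c · γ'))
  have hH : IsCofinalIn H κ.ord := isCofinalIn_of_lift_le_mk hHcard.ge
  have hlex := monotoneOn_or_antitoneOn_of_lt_iff (f := fun γ => toLex (c · γ)) (P := b = true)
    fun x hx y hy hxy => by rw [← hb x hx y hy hxy, decide_eq_true_iff]; exact Iff.rfl
  choose! m hmH hαm hm using fun α (hα : α < κ.ord) =>
    hc.exists_eqOn_Iio hκr hκi.isStrongLimit hθκ hH hHκ hlex hα
  have hgκ : ∀ ξ < κ.ord, m (Order.succ ξ) < κ.ord := fun ξ hξ => hHκ (hmH _ (hlim.succ_lt hξ))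
  -- `v ξ := c ξ (m (succ ξ))` is the value of `c ξ γ` for all large `γ ∈ H`: the cofinal branch
  have hstable : ∀ ξ < κ.ord, ∀ γ ∈ H, m (Order.succ ξ) ≤ γ → c ξ γ = c ξ (m (Order.succ ξ)) :=
    fun ξ hξ γ hγ hmγ => hm _ (hlim.succ_lt hξ) γ hγ hmγ (Order.lt_succ ξ)
  have hv : MapsTo (fun ξ => c ξ (m (Order.succ ξ))) H (Iio θ.ord) := fun ξ hξ =>
    hc _ _ ((Order.lt_succ ξ).trans_le (hαm _ (hlim.succ_lt (hHκ hξ)))) (hgκ ξ (hHκ hξ))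
  obtain ⟨X, hXH, hX, i, hiθ, hi⟩ := hH.exists_subset_eq_const hκr hHκ
    (by rwa [Cardinal.mk_Iio_ordinal, card_ord, Cardinal.lift_lt]) hv
  obtain ⟨A, hAX, hA, hsparse⟩ := hX.exists_sparse_subset hκr hκi.aleph0_lt.ne' hgκ
  have hAκ : A ⊆ Iio κ.ord := hAX.trans (hXH.trans hHκ)
  refine ⟨A, hAκ, hA.hasCard hκr hAκ, i, hiθ, fun γ hγ γ' hγ' hlt => ?_⟩
  rw [hstable γ (hAκ hγ) γ' (hXH (hAX hγ')) (hsparse γ hγ γ' hγ' hlt), hi γ (hAX hγ)]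

theorem stmt5 (κ θ : Cardinal) (hκ : IsWeaklyCompact κ)
    (hθreg : θ.IsRegular) (hθκ : θ < κ)
    (c : Ordinal → Ordinal → Ordinal) (hc : IsColoring κ θ c) :
    ∃ A ⊆ Set.Iio κ.ord, HasCard A κ ∧ ∃ i < θ.ord,
      ∀ α ∈ A, ∀ β ∈ A, α < β → c α β ≤ i :=
  stmt5_general κ θ hκ hθκ c hc
end
end

section
/- Suppose λ is a singular limit of strongly compact cardinals and θ is an infinite regular cardinal below λ with θ ≠ cf(λ). Then U(λ⁺, 2, θ, cf(λ)⁺) fails: for every coloring c : [λ⁺]² → θ there exist i < θ and a family A of λ⁺-many pairwise disjoint subsets of λ⁺ each of size ≤ cf(λ), such that min(c[a × b]) ≤ i for every pair a < b from A. -/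
open Cardinal Set Ordinal

noncomputable section

/-- `D` is a club in (the ordinal) `o`: a closed and unbounded subset of `o`. -/
def OrdIsClub (D : Set Ordinal) (o : Ordinal) : Prop :=
  D ⊆ Set.Iio o ∧ (∀ α < o, ∃ β ∈ D, α ≤ β) ∧
    ∀ γ < o, 0 < γ → (∀ x < γ, ∃ β ∈ D, x < β ∧ β < γ) → γ ∈ D

/-- `S` is stationary in `o`: it meets every club in `o`. -/
def OrdIsStationary (S : Set Ordinal) (o : Ordinal) : Prop :=
  ∀ D, OrdIsClub D o → (S ∩ D).Nonempty

/-- `F` is a `ν`-complete filter: it is closed under intersections of fewer than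
`ν`-many of its members. -/
def IsCompleteFilter (ν : Cardinal) {α : Type} (F : Filter α) : Prop :=
  ∀ S : Set (Set α), Cardinal.mk S < ν → (∀ s ∈ S, s ∈ F) → ⋂₀ S ∈ F

/-- `ν` is strongly compact: it is uncountable and every `ν`-complete (proper) filter
extends to a `ν`-complete ultrafilter. -/
def IsStronglyCompact (ν : Cardinal) : Prop :=
  ℵ₀ < ν ∧ ∀ (α : Type) (F : Filter α), F.NeBot → IsCompleteFilter ν F →
    ∃ Uf : Ultrafilter α, (Uf : Filter α) ≤ F ∧ IsCompleteFilter ν (Uf : Filter α)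

/-!
For `j < λ` let `U_j` be a `ν_j`-complete ultrafilter on `λ⁺` containing all final segments, where
`ν_j < λ` is strongly compact and above `θ` and `|j|`. Call `x` `(U, i)`-low if `c(x, y) ≤ i` for
`U`-almost every `y`. Two applications of `θ⁺`-completeness give `i_j < θ` such that `U_j`-almost
every point is `(U_j, i_j)`-low, and since `θ ≠ cf λ` a single `i < θ` bounds `i_j` on a cofinal
`J ⊆ λ` of size at most `cf λ`.

The blocks are built by a recursion of length `λ⁺`, each of size at most `|J|` and containing a
`(U_j, i)`-low point for every `j ∈ J`. Index the at most `λ` earlier blocks injectively by ordinals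
below `λ`. For `j ∈ J` fewer than `ν_j` of them have index below `j`, so by `ν_j`-completeness some
`y_j` above all earlier blocks is `(U_j, i)`-low and has colour at most `i` with the low point of
each of those blocks. The new block is `{y_j | j ∈ J}`; as `J` is cofinal in `λ`, every earlier
block is linked to it.
-/

open Order Filter Function

section CompleteFilter

variable {α : Type} {ν : Cardinal}

theorem IsCompleteFilter.mono {ν' : Cardinal} {F : Filter α} (hF : IsCompleteFilter ν F)
    (h : ν' ≤ ν) : IsCompleteFilter ν' F :=
  fun S hS => hF S (hS.trans_le h)

theorem IsCompleteFilter.iInter_mem {F : Filter α} (hF : IsCompleteFilter ν F) {ι : Type}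
    (hι : #ι < ν) {s : ι → Set α} (hs : ∀ k, s k ∈ F) : ⋂ k, s k ∈ F := by
  rw [← sInter_range]
  exact hF _ (mk_range_le.trans_lt hι) (forall_mem_range.2 hs)

theorem IsCompleteFilter.exists_mem_of_iUnion_mem {U : Ultrafilter α}
    (hU : IsCompleteFilter ν (U : Filter α)) {ι : Type} (hι : #ι < ν) {s : ι → Set α}
    (hs : ⋃ k, s k ∈ U) : ∃ k, s k ∈ U := by
  by_contra! h
  have hcompl : ⋂ k, (s k)ᶜ ∈ U :=
    hU.iInter_mem hι fun k => Ultrafilter.compl_mem_iff_notMem.2 (h k)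
  rw [← compl_iUnion] at hcompl
  exact Ultrafilter.compl_notMem_iff.2 hs hcompl

theorem IsCompleteFilter.exists_fiber_mem {U : Ultrafilter α}
    (hU : IsCompleteFilter ν (U : Filter α)) {o : Ordinal} (ho : o.card < ν) {f : α → Ordinal}
    (hf : ∀ᶠ x in U, f x < o) : ∃ i < o, {x | f x = i} ∈ U := by
  have hcover : ⋃ t : o.ToType, {x | f x = t} ∈ U := by
    refine mem_of_superset hf fun x hx => mem_iUnion.2 ⟨ToType.mk ⟨f x, hx⟩, ?_⟩
    simp
  obtain ⟨t, ht⟩ := hU.exists_mem_of_iUnion_mem (by rwa [mk_toType]) hcover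
  exact ⟨t, (ToType.toOrd t).2, ht⟩

end CompleteFilter

section LowColor

variable {α : Type} (U : Ultrafilter α) (c : α → α → Ordinal)

def lowColorPoints (i : Ordinal) : Set α := {x | ∀ᶠ y in U, c x y ≤ i}

variable {U c}

theorem lowColorPoints_mono {i i' : Ordinal} (h : i ≤ i') :
    lowColorPoints U c i ⊆ lowColorPoints U c i' :=
  fun _ hx => hx.mono fun _ hy => hy.trans h

theorem exists_lowColorPoints_mem [Preorder α] [NoMaxOrder α] {ν θ : Cardinal}
    (hU : IsCompleteFilter ν (U : Filter α)) (hUtop : (U : Filter α) ≤ atTop) (hθ : θ < ν)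
    (hc : ∀ x y, x < y → c x y < θ.ord) : ∃ i < θ.ord, lowColorPoints U c i ∈ U := by
  have hθ' : θ.ord.card < ν := by rwa [card_ord]
  have hlocal : ∀ x, ∃ i < θ.ord, {y | c x y = i} ∈ U := fun x =>
    hU.exists_fiber_mem hθ' (mem_of_superset (hUtop (Ioi_mem_atTop x)) (hc x))
  choose g hg hgU using hlocal
  obtain ⟨i, hi, hiU⟩ := hU.exists_fiber_mem hθ' (Eventually.of_forall hg)
  exact ⟨i, hi, mem_of_superset hiU fun x hx =>
    mem_of_superset (hgU x) fun y hy => (hy.trans hx).le⟩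

end LowColor

section Cofinality

variable {α : Type} [LinearOrder α]

theorem mk_Iio_ord_toType_lt {κ : Cardinal} (a : κ.ord.ToType) : #(Iio a) < κ := by
  simpa using mk_Iio_lt a (by simp)

theorem IsCofinal.exists_gt [NoMaxOrder α] {s : Set α} (hs : IsCofinal s) (a : α) :
    ∃ b ∈ s, a < b :=
  let ⟨a', ha'⟩ := NoMaxOrder.exists_gt a
  (hs a').imp fun _ ⟨hb, hab⟩ => ⟨hb, ha'.trans_le hab⟩

theorem exists_gt_of_mk_lt_cof {s : Set α} (hs : #s < Order.cof α) : ∃ b, ∀ x ∈ s, x < b :=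
  not_isCofinal_iff.1 fun h => (cof_le h).not_gt hs

theorem isCompleteFilter_atTop [Nonempty α] {ν : Cardinal} (hν : ν ≤ Order.cof α) :
    IsCompleteFilter ν (atTop : Filter α) := by
  intro S hS hSmem
  choose a ha using fun s : S => mem_atTop_sets.1 (hSmem s s.2)
  obtain ⟨b, hb⟩ := exists_gt_of_mk_lt_cof (mk_range_le.trans_lt (hS.trans_le hν))
  exact mem_atTop_sets.2 ⟨b, fun y hy s hs => ha ⟨s, hs⟩ y ((hb _ (mem_range_self _)).le.trans hy)⟩

theorem IsStronglyCompact.exists_ultrafilter_le_atTop {ν κ : Cardinal}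
    (hν : IsStronglyCompact ν) (hκ : κ.IsRegular) (hνκ : ν ≤ κ) :
    ∃ U : Ultrafilter κ.ord.ToType, (U : Filter κ.ord.ToType) ≤ atTop ∧
      IsCompleteFilter ν (U : Filter κ.ord.ToType) :=
  have : Nonempty κ.ord.ToType := nonempty_toType_iff.2 (ord_pos.2 hκ.pos).ne'
  hν.2 _ atTop atTop_neBot (isCompleteFilter_atTop (by rwa [cof_toType, hκ.cof_ord]))

theorem exists_isCofinal_forall_le {θ : Cardinal} (hθ : θ.IsRegular) (hθα : θ ≠ Order.cof α)
    (f : α → Ordinal) (hf : ∀ j, f j < θ.ord) :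
    ∃ i < θ.ord, ∃ J : Set α, IsCofinal J ∧ #J ≤ Order.cof α ∧ ∀ j ∈ J, f j ≤ i := by
  obtain ⟨C, hC, hCcard⟩ := Order.exists_cof_eq α
  rcases hθα.lt_or_gt with hlt | hgt
  · have hcover : IsCofinal (⋃ t : θ.ord.ToType, {j ∈ C | f j = t}) := by
      refine fun a => (hC a).imp fun j ⟨hjC, hj⟩ => ⟨mem_iUnion.2 ⟨ToType.mk ⟨f j, hf j⟩, ?_⟩, hj⟩
      simpa using hjC
    obtain ⟨t, ht⟩ := isCofinal_of_isCofinal_iUnion hcover (by rwa [mk_ord_toType])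
    exact ⟨t, (ToType.toOrd t).2, _, ht, (mk_le_mk_of_subset (sep_subset _ _)).trans hCcard.le,
      fun j hj => hj.2.le⟩
  · refine ⟨⨆ j : C, f j, iSup_lt_of_lt_cof (by rwa [hθ.cof_ord, hCcard]) fun j => hf j,
      C, hC, hCcard.le, fun j hj => ?_⟩
    exact Ordinal.le_iSup _ (⟨j, hj⟩ : C)

end Cofinality

theorem exists_transfinite_seq {ι β : Type*} [LT ι] [WellFoundedLT ι] [Nonempty β]
    (P : β → Prop) (R : β → β → Prop)
    (step : ∀ a (g : ι → β), (∀ b < a, P (g b)) → ∃ s, P s ∧ ∀ b < a, R (g b) s) :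
    ∃ G : ι → β, ∀ a, P (G a) ∧ ∀ b < a, R (G b) (G a) := by
  classical
  let extend (a : ι) (g : ∀ b < a, Subtype P) : ι → β :=
    fun b => if h : b < a then (g b h).1 else Classical.arbitrary β
  have extend_of_lt : ∀ a g b (h : b < a), extend a g b = (g b h).1 := fun _ _ _ h => dif_pos h
  have hP : ∀ a g, ∀ b < a, P (extend a g b) := fun a g b h => extend_of_lt a g b h ▸ (g b h).2
  let F (a : ι) (g : ∀ b < a, Subtype P) : Subtype P :=
    ⟨(step a (extend a g) (hP a g)).choose, (step a (extend a g) (hP a g)).choose_spec.1⟩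
  let G := wellFounded_lt.fix F
  refine ⟨fun a => (G a).1, fun a => ⟨(G a).2, fun b hb => ?_⟩⟩
  have hR := (step a (extend a fun b _ => G b) (hP a _)).choose_spec.2 b hb
  rw [extend_of_lt a (fun b _ => G b) b hb] at hR
  show R (G b).1 (G a).1
  rwa [show G a = F a (fun b _ => G b) from wellFounded_lt.fix_eq F a]

section LinkedBlocks

variable {α β : Type} [LinearOrder α] [LinearOrder β] [NoMaxOrder α] [NoMaxOrder β]
  {U : β → Ultrafilter α} {c : α → α → Ordinal} {i : Ordinal} {J : Set β}

theorem exists_block_above {ι : Type} (e : ι ↪ β)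
    (hU : ∀ j, IsCompleteFilter (succ #(Iio j)) (U j : Filter α))
    (hUtop : ∀ j, (U j : Filter α) ≤ atTop) (hJ : IsCofinal J)
    (hL : ∀ j ∈ J, lowColorPoints (U j) c i ∈ U j)
    (B : ι → Set α) (hB : ∀ k, ∀ j ∈ J, (B k ∩ lowColorPoints (U j) c i).Nonempty) (δ : α) :
    ∃ s : Set α, #s ≤ #J ∧ (∀ j ∈ J, (s ∩ lowColorPoints (U j) c i).Nonempty) ∧
      (∀ y ∈ s, δ < y) ∧ ∀ k, ∃ x ∈ B k, ∃ y ∈ s, c x y ≤ i := by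
  choose x hxB hxL using hB
  have hy : ∀ j : J, ∃ y ∈ lowColorPoints (U j) c i, δ < y ∧
      ∀ k, e k < j → c (x k j j.2) y ≤ i := by
    rintro ⟨j, hj⟩
    have hsmall : #{k // e k < j} < succ #(Iio j) :=
      lt_succ_of_le (mk_le_of_injective (f := fun k => (⟨e k.1, k.2⟩ : Iio j))
        fun k k' h => Subtype.ext (e.injective (congrArg Subtype.val h)))
    have hlinks : ⋂ k : {k // e k < j}, {y | c (x k j hj) y ≤ i} ∈ U j :=
      (hU j).iInter_mem hsmall fun k => hxL k j hj
    obtain ⟨y, hyL, hyδ, hylinks⟩ := Ultrafilter.nonempty_of_mem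
      (inter_mem (hL j hj) (inter_mem (hUtop j (Ioi_mem_atTop δ)) hlinks))
    exact ⟨y, hyL, hyδ, fun k hk => mem_iInter.1 hylinks ⟨k, hk⟩⟩
  choose y hyL hyδ hylinks using hy
  refine ⟨range y, mk_range_le, fun j hj => ⟨y ⟨j, hj⟩, mem_range_self _, hyL _⟩,
    forall_mem_range.2 hyδ, fun k => ?_⟩
  obtain ⟨j, hj, hkj⟩ := hJ.exists_gt (e k)
  exact ⟨x k j hj, hxB k j hj, y ⟨j, hj⟩, mem_range_self _, hylinks ⟨j, hj⟩ k hkj⟩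

theorem exists_linked_blocks [WellFoundedLT α] (hβ : ℵ₀ ≤ #β) (hβα : #β < Order.cof α)
    (hIio : ∀ a : α, #(Iio a) ≤ #β) (hJβ : #J ≤ #β)
    (hU : ∀ j, IsCompleteFilter (succ #(Iio j)) (U j : Filter α))
    (hUtop : ∀ j, (U j : Filter α) ≤ atTop) (hJ : IsCofinal J)
    (hL : ∀ j ∈ J, lowColorPoints (U j) c i ∈ U j) :
    ∃ G : α → Set α, ∀ a, (#(G a) ≤ #J ∧ ∀ j ∈ J, (G a ∩ lowColorPoints (U j) c i).Nonempty) ∧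
      ∀ b < a, (∀ x ∈ G b, ∀ y ∈ G a, x < y) ∧ ∃ x ∈ G b, ∃ y ∈ G a, c x y ≤ i := by
  refine exists_transfinite_seq
    (fun s : Set α => #s ≤ #J ∧ ∀ j ∈ J, (s ∩ lowColorPoints (U j) c i).Nonempty)
    (fun t s : Set α => (∀ x ∈ t, ∀ y ∈ s, x < y) ∧ ∃ x ∈ t, ∃ y ∈ s, c x y ≤ i) fun a g hg => ?_
  have hprev : #(⋃ b : Iio a, g b) < Order.cof α := calc
    _ ≤ #(Iio a) * ⨆ b : Iio a, #(g b) := mk_iUnion_le _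
    _ ≤ #β * #β := mul_le_mul' (hIio a) (ciSup_le' fun b => (hg b b.2).1.trans hJβ)
    _ = #β := mul_eq_self hβ
    _ < _ := hβα
  obtain ⟨δ, hδ⟩ := exists_gt_of_mk_lt_cof hprev
  obtain ⟨e⟩ := (le_def _ _).1 (hIio a)
  obtain ⟨s, hsJ, hsL, hsδ, hlinks⟩ :=
    exists_block_above e hU hUtop hJ hL (fun b => g b) (fun b => (hg b b.2).2) δ
  exact ⟨s, ⟨hsJ, hsL⟩, fun b hb =>
    ⟨fun x hx y hy => (hδ x (mem_iUnion.2 ⟨⟨b, hb⟩, hx⟩)).trans (hsδ y hy), hlinks ⟨b, hb⟩⟩⟩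

end LinkedBlocks

section IncreasingBlocks

variable {α : Type} [LinearOrder α] {G : α → Set α}

theorem pairwise_disjoint_of_forall_lt (hlt : ∀ a b, a < b → ∀ x ∈ G a, ∀ y ∈ G b, x < y) :
    Pairwise (Disjoint on G) := by
  intro a b hab
  rcases hab.lt_or_gt with h | h
  · exact disjoint_left.2 fun x hxa hxb => (hlt a b h x hxa x hxb).false
  · exact disjoint_left.2 fun x hxa hxb => (hlt b a h x hxb x hxa).false

theorem injective_of_forall_lt (hne : ∀ a, (G a).Nonempty)
    (hlt : ∀ a b, a < b → ∀ x ∈ G a, ∀ y ∈ G b, x < y) : Injective G := by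
  intro a b hab
  by_contra hne'
  have := pairwise_disjoint_of_forall_lt hlt hne'
  rw [onFun, hab, disjoint_self] at this
  exact (hne b).ne_empty (bot_eq_empty ▸ this)

theorem lt_of_setLT_image {φ : α → Ordinal} (hφ : StrictMono φ) (hne : ∀ a, (G a).Nonempty)
    (hlt : ∀ a b, a < b → ∀ x ∈ G a, ∀ y ∈ G b, x < y) {a b : α}
    (h : SetLT (φ '' G a) (φ '' G b)) : a < b := by
  obtain ⟨x, hx⟩ := hne a
  obtain ⟨y, hy⟩ := hne b
  have hxy := h _ (mem_image_of_mem φ hx) _ (mem_image_of_mem φ hy)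
  by_contra! hba
  rcases hba.lt_or_eq with hba | rfl
  · exact hxy.not_gt (hφ (hlt b a hba y hy x hx))
  · exact (h _ (mem_image_of_mem φ hx) _ (mem_image_of_mem φ hx)).false

end IncreasingBlocks

theorem exists_family_of_blocks {κ χ : Cardinal} [NoMaxOrder κ.ord.ToType]
    {G : κ.ord.ToType → Set κ.ord.ToType} (hcard : ∀ a, #(G a) ≤ χ)
    (hlt : ∀ a b, a < b → ∀ x ∈ G a, ∀ y ∈ G b, x < y)
    {c : Ordinal → Ordinal → Ordinal} {i : Ordinal}
    (hlink : ∀ a b, a < b → ∃ x ∈ G a, ∃ y ∈ G b, c x y ≤ i) :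
    ∃ A : Set (Set Ordinal),
      (∀ a ∈ A, a ⊆ Iio κ.ord ∧ a.Nonempty ∧ #a ≤ lift.{1, 0} χ) ∧
      A.PairwiseDisjoint id ∧ HasCard A κ ∧
      ∀ a ∈ A, ∀ b ∈ A, SetLT a b → ∃ α ∈ a, ∃ β ∈ b, c α β ≤ i := by
  let φ : κ.ord.ToType → Ordinal := fun x => x
  have hφ : StrictMono φ := (Subtype.strictMono_coe _).comp ToType.mk.symm.strictMono
  have hne : ∀ a, (G a).Nonempty := fun a =>
    let ⟨b, hab⟩ := exists_gt a
    let ⟨x, hx, _⟩ := hlink a b hab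
    ⟨x, hx⟩
  refine ⟨range fun a => φ '' G a, ?_, ?_, ?_, ?_⟩
  · rintro _ ⟨a, rfl⟩
    refine ⟨image_subset_iff.2 fun x _ => (ToType.toOrd x).2, (hne a).image φ, ?_⟩
    rw [← Cardinal.lift_uzero #(φ '' G a), mk_image_eq_lift φ _ hφ.injective]
    exact lift_le.2 (hcard a)
  · exact Pairwise.range_pairwise fun a b hab =>
      (disjoint_image_iff hφ.injective).2 (pairwise_disjoint_of_forall_lt hlt hab)
  · have := mk_range_eq_of_injective
      ((image_injective.2 hφ.injective).comp (injective_of_forall_lt hne hlt))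
    rwa [Cardinal.lift_uzero, mk_ord_toType] at this
  · rintro _ ⟨a, rfl⟩ _ ⟨b, rfl⟩ hab
    obtain ⟨x, hx, y, hy, hxy⟩ := hlink a b (lt_of_setLT_image hφ hne hlt hab)
    exact ⟨φ x, mem_image_of_mem φ hx, φ y, mem_image_of_mem φ hy, hxy⟩

theorem stmt6_general (lam θ : Cardinal)
    (hlim : ∀ μ < lam, ∃ ν, μ < ν ∧ ν < lam ∧ IsStronglyCompact ν)
    (hθreg : θ.IsRegular) (hθlt : θ < lam) (hθcf : θ ≠ lam.ord.cof)
    (c : Ordinal → Ordinal → Ordinal) (hc : IsColoring (Order.succ lam) θ c) :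
    ∃ i < θ.ord, ∃ A : Set (Set Ordinal),
      (∀ a ∈ A, a ⊆ Set.Iio (Order.succ lam).ord ∧ a.Nonempty ∧
        Cardinal.mk a ≤ Cardinal.lift.{1, 0} lam.ord.cof) ∧
      A.PairwiseDisjoint id ∧ HasCard A (Order.succ lam) ∧
      ∀ a ∈ A, ∀ b ∈ A, SetLT a b → ∃ α ∈ a, ∃ β ∈ b, c α β ≤ i := by
  have hlam : ℵ₀ ≤ lam := hθreg.aleph0_le.trans hθlt.le
  let α := (succ lam).ord.ToType
  let β := lam.ord.ToType
  have : NoMaxOrder α := Cardinal.noMaxOrder (hlam.trans (le_succ lam))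
  have : NoMaxOrder β := Cardinal.noMaxOrder hlam
  have hβ : #β = lam := mk_ord_toType lam
  have hUf (j : β) : ∃ U : Ultrafilter α, (U : Filter α) ≤ atTop ∧
      IsCompleteFilter (succ (max θ #(Iio j))) (U : Filter α) := by
    obtain ⟨ν, hμν, hνlam, hν⟩ := hlim _ (max_lt hθlt (mk_Iio_ord_toType_lt j))
    obtain ⟨U, hUtop, hU⟩ := hν.exists_ultrafilter_le_atTop (isRegular_succ hlam)
      (hνlam.le.trans (le_succ lam))
    exact ⟨U, hUtop, hU.mono (succ_le_of_lt hμν)⟩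
  choose U hUtop hU using hUf
  let c' : α → α → Ordinal := fun x y => c x y
  have hcolor (j : β) : ∃ i < θ.ord, lowColorPoints (U j) c' i ∈ U j :=
    exists_lowColorPoints_mem (hU j) (hUtop j) (lt_succ_of_le (le_max_left _ _))
      fun x y h => hc _ _ (ToType.mk.symm.strictMono h) (ToType.toOrd y).2
  choose f hf hfL using hcolor
  obtain ⟨i, hi, J, hJ, hJcard, hfJ⟩ := exists_isCofinal_forall_le hθreg (by rwa [cof_toType]) f hf
  rw [cof_toType] at hJcard
  obtain ⟨G, hG⟩ := exists_linked_blocks (hβ ▸ hlam)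
    (by rw [hβ, cof_toType, (isRegular_succ hlam).cof_ord]; exact lt_succ lam)
    (fun a => (le_of_lt_succ (mk_Iio_ord_toType_lt a)).trans_eq hβ.symm)
    (hJcard.trans (hβ ▸ cof_ord_le lam)) (fun j => (hU j).mono (succ_le_succ (le_max_right _ _)))
    hUtop hJ fun j hj => mem_of_superset (hfL j) (lowColorPoints_mono (hfJ j hj))
  exact ⟨i, hi, exists_family_of_blocks (fun a => (hG a).1.1.trans hJcard)
    (fun a b h => ((hG b).2 a h).1) fun a b h => ((hG b).2 a h).2⟩

theorem stmt6 (lam θ : Cardinal)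
    (hinf : ℵ₀ ≤ lam) (hsing : lam.ord.cof < lam)
    (hlim : ∀ μ < lam, ∃ ν, μ < ν ∧ ν < lam ∧ IsStronglyCompact ν)
    (hθreg : θ.IsRegular) (hθlt : θ < lam) (hθcf : θ ≠ lam.ord.cof)
    (c : Ordinal → Ordinal → Ordinal) (hc : IsColoring (Order.succ lam) θ c) :
    ∃ i < θ.ord, ∃ A : Set (Set Ordinal),
      (∀ a ∈ A, a ⊆ Set.Iio (Order.succ lam).ord ∧ a.Nonempty ∧
        Cardinal.mk a ≤ Cardinal.lift.{1, 0} lam.ord.cof) ∧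
      A.PairwiseDisjoint id ∧ HasCard A (Order.succ lam) ∧
      ∀ a ∈ A, ∀ b ∈ A, SetLT a b → ∃ α ∈ a, ∃ β ∈ b, c α β ≤ i :=
  stmt6_general lam θ hlim hθreg hθlt hθcf c hc
end
end

section
/- Suppose λ = λ^{<λ} is a regular uncountable cardinal and, for each i < ω, P_i is a λ-centered poset. Then the full-support product ∏_{i<ω} P_i is λ-centered. -/
open Cardinal Set Ordinal

noncomputable section

/-- A poset `P` is `λ`-centered: it is covered by `λ`-many centered subsets, where a
subset is centered iff each of its finite subsets has a lower bound in `P`. -/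
def LamCentered (lam : Cardinal) (P : Type u) [Preorder P] : Prop :=
  ∃ F : P → Ordinal, (∀ p, F p < lam.ord) ∧
    ∀ o : Ordinal, ∀ s : Finset P, (∀ p ∈ s, F p = o) → ∃ q, ∀ p ∈ s, q ≤ p

/-!
Colour each `P i` by its `λ` centered pieces. An element of the product is then coloured by a
sequence `ℕ → λ`, and there are only `λ ^ ℵ₀ ≤ λ ^< λ = λ` such sequences. Elements with the same
sequence lie coordinatewise in the same centered pieces, so finitely many of them have a
coordinatewise lower bound.
-/

def IsCenteredColoring {P : Type*} [Preorder P] {α : Type*} (c : P → α) : Prop :=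
  ∀ s : Finset P, (∀ p ∈ s, ∀ p' ∈ s, c p = c p') → ∃ q, ∀ p ∈ s, q ≤ p

theorem LamCentered.exists_isCenteredColoring {lam : Cardinal} {P : Type*} [Preorder P]
    (h : LamCentered lam P) : ∃ c : P → Iio lam.ord, IsCenteredColoring c := by
  obtain ⟨F, hF_lt, hF_centered⟩ := h
  refine ⟨fun p => ⟨F p, hF_lt p⟩, fun s hs => ?_⟩
  rcases s.eq_empty_or_nonempty with rfl | ⟨p₀, hp₀⟩
  · simpa using hF_centered 0 ∅ (by simp)
  · exact hF_centered (F p₀) s fun p hp => congrArg Subtype.val (hs p hp p₀ hp₀)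

theorem IsCenteredColoring.comp_injective {P : Type*} [Preorder P] {α β : Type*} {c : P → α}
    (hc : IsCenteredColoring c) {e : α → β} (he : e.Injective) : IsCenteredColoring (e ∘ c) :=
  fun s hs => hc s fun p hp p' hp' => he (hs p hp p' hp')

theorem IsCenteredColoring.pi {ι : Type*} {P : ι → Type*} [∀ i, Preorder (P i)]
    {α : ι → Type*} {c : ∀ i, P i → α i} (hc : ∀ i, IsCenteredColoring (c i)) :
    IsCenteredColoring fun (p : ∀ i, P i) i => c i (p i) := by
  classical
  intro s hs
  have hbound : ∀ i, ∃ q : P i, ∀ x ∈ s.image (· i), q ≤ x := fun i =>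
    hc i _ <| by
      simp only [Finset.mem_image]
      rintro _ ⟨p, hp, rfl⟩ _ ⟨p', hp', rfl⟩
      exact congrFun (hs p hp p' hp') i
  choose q hq using hbound
  exact ⟨q, fun p hp i => hq i (p i) (Finset.mem_image_of_mem _ hp)⟩

theorem LamCentered.of_isCenteredColoring {lam : Cardinal.{v}} {P : Type*} [Preorder P]
    {α : Type w} (hα : lift.{v} #α ≤ lift.{w} lam) {c : P → α} (hc : IsCenteredColoring c) :
    LamCentered lam P := by
  have : lift.{v + 1} #α ≤ lift.{w} #(Iio lam.ord) := by
    rw [Cardinal.mk_Iio_ordinal, card_ord, Cardinal.lift_lift]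
    simpa using Cardinal.lift_le.{v + 1}.mpr hα
  obtain ⟨e⟩ := lift_mk_le'.mp this
  refine ⟨fun p => e (c p), fun p => (e (c p)).2, fun o s hs => ?_⟩
  exact hc.comp_injective (Subtype.val_injective.comp e.injective) s
    fun p hp p' hp' => (hs p hp).trans (hs p' hp').symm

theorem power_aleph0_le_of_powerlt_self {lam : Cardinal} (hunc : ℵ₀ < lam)
    (hpow : lam ^< lam = lam) : lam ^ ℵ₀ ≤ lam :=
  (le_powerlt lam hunc).trans hpow.le

theorem stmt8_general (lam : Cardinal) (hunc : ℵ₀ < lam)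
    (hpow : Cardinal.powerlt lam lam = lam)
    (P : ℕ → Type u) [∀ i, Preorder (P i)]
    (h : ∀ i, LamCentered lam (P i)) :
    LamCentered lam (∀ i, P i) := by
  choose c hc using fun i => (h i).exists_isCenteredColoring
  refine LamCentered.of_isCenteredColoring ?_ (IsCenteredColoring.pi hc)
  simpa [mk_arrow, Cardinal.mk_Iio_ordinal, Cardinal.lift_power]
    using Cardinal.lift_le.mpr (power_aleph0_le_of_powerlt_self hunc hpow)

theorem stmt8 (lam : Cardinal) (hreg : lam.IsRegular) (hunc : ℵ₀ < lam)
    (hpow : Cardinal.powerlt lam lam = lam)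
    (P : ℕ → Type u) [∀ i, Preorder (P i)]
    (h : ∀ i, LamCentered lam (P i)) :
    LamCentered lam (∀ i, P i) :=
  stmt8_general lam hunc hpow P h
end
end

section
/- Suppose c : [κ]² → θ is a coloring, ω ≤ χ < κ, and for every family A ⊆ [κ]^{<χ} of κ-many pairwise disjoint sets, every club D ⊆ κ, and every i < θ, there exist γ ∈ D, a ∈ A, and ε < γ such that γ < a and for all α ∈ (ε, γ) and β ∈ a we have c(α,β) > i. Then c witnesses U(κ, κ, θ, χ): for every family A ⊆ [κ]^{<χ} of κ-many pairwise disjoint sets and every i < θ, there exists B ∈ [A]^κ with min(c[a × b]) > i for all pairs a < b from B. -/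
/-!
The hypothesis says that the set of `γ` admitting some `a ∈ A` above `γ` and some `ε < γ` with
`c(α, β) > i` for `α ∈ (ε, γ)`, `β ∈ a` meets every club, i.e. is stationary; the assignment
`γ ↦ ε` is regressive, so by Fodor's lemma one `ε` works for unboundedly many `γ`. Among these,
thin out to `κ` many `γ` each lying above all elements of the sets chosen for the earlier ones
(possible since `κ` is regular and the sets have size `< χ < κ`). For two of the chosen sets
`a < b`, with `b` chosen for `γ`, every element of `a` lies in `(ε, γ)`, so all colours exceed `i`.
-/

open Cardinal Set Ordinal

noncomputable section

theorem Cardinal.mk_Iio_lt_of_lt_ord {κ : Cardinal.{0}} {y : Ordinal} (hy : y < κ.ord) :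
    #(Iio y) < Cardinal.lift.{1} κ := by
  rw [mk_Iio_ordinal, lift_lt]
  exact lt_ord.mp hy

theorem Cardinal.mk_sdiff_singleton_of_aleph0_le {α : Type*} {s : Set α} (hs : ℵ₀ ≤ #s) (x : α) :
    #(s \ {x} : Set α) = #s := by
  refine le_antisymm (mk_le_mk_of_subset sdiff_subset) (not_lt.mp fun hlt => ?_)
  have h := le_mk_sdiff_add_mk s {x}
  rw [mk_singleton] at h
  exact h.not_gt (add_lt_of_lt hs hlt (one_lt_aleph0.trans_le hs))

namespace Cardinal.IsRegular

variable {κ : Cardinal.{0}}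

theorem sSup_lt_ord (hκ : κ.IsRegular) {s : Set Ordinal} (hs : s ⊆ Iio κ.ord)
    (hcard : #s < Cardinal.lift.{1} κ) : sSup s < κ.ord :=
  Ordinal.sSup_lt_of_lt_cof (by rwa [← Ordinal.lift_cof, hκ.cof_ord]) hs

theorem mk_eq_of_unbounded (hκ : κ.IsRegular) {s : Set Ordinal} (hs : s ⊆ Iio κ.ord)
    (hub : ∀ x < κ.ord, ∃ y ∈ s, x < y) : #s = Cardinal.lift.{1} κ := by
  refine le_antisymm ?_ (not_lt.mp fun hlt => ?_)
  · simpa using mk_le_mk_of_subset hs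
  · obtain ⟨y, hy, hlt'⟩ := hub _ (hκ.sSup_lt_ord hs hlt)
    exact hlt'.not_ge (le_csSup ⟨κ.ord, fun _ h => (hs h).le⟩ hy)

end Cardinal.IsRegular

def closurePoints (f : Ordinal → Ordinal) (o : Ordinal) : Set Ordinal :=
  {γ | γ < o ∧ 0 < γ ∧ ∀ ε < γ, f ε < γ}

theorem isClubBelow_closurePoints {κ : Cardinal.{0}} (hκ : κ.IsRegular) (hunc : ℵ₀ < κ)
    {f : Ordinal → Ordinal} (hf : ∀ ε < κ.ord, f ε < κ.ord) :
    IsClubBelow (closurePoints f κ.ord) κ.ord := by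
  have hlim : Order.IsSuccLimit κ.ord := isSuccLimit_ord hκ.aleph0_le
  -- `g` strictly inflates and bounds `f` on `Iio y`; closure points arise as its fixed points.
  set g : Ordinal → Ordinal := fun y => max y (sSup (f '' Iio y)) + 1
  have hg_bound : ∀ y, ∀ ε < y, f ε < g y := fun y ε hε =>
    ((le_csSup Ordinal.bddAbove_of_small (mem_image_of_mem f (show ε ∈ Iio y from hε))).trans
      (le_max_right _ _)).trans_lt (lt_add_one _)
  have hg_lt : ∀ y < κ.ord, g y < κ.ord := by
    intro y hy
    have hsup : sSup (f '' Iio y) < κ.ord := hκ.sSup_lt_ord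
      (by rintro _ ⟨ε, hε, rfl⟩; exact hf ε (hε.trans hy))
      (mk_image_le.trans_lt (mk_Iio_lt_of_lt_ord hy))
    exact hlim.add_one_lt (max_lt hy hsup)
  refine ⟨fun γ hγ => hγ.1, fun α hα => ?_, fun γ hγ hγ0 hcof => ⟨hγ, hγ0, fun ε hε => ?_⟩⟩
  · refine ⟨Ordinal.nfp g (α + 1), ⟨nfp_lt_ord_of_isRegular hκ hunc.ne' hg_lt
      (hlim.add_one_lt hα), ?_, fun ε hε => ?_⟩, ?_⟩
    · exact (zero_le.trans_lt (lt_add_one α)).trans_le (Ordinal.le_nfp g _)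
    · obtain ⟨n, hn⟩ := Ordinal.lt_nfp_iff.mp hε
      calc f ε < g (g^[n] (α + 1)) := hg_bound _ ε hn
        _ = g^[n + 1] (α + 1) := (Function.iterate_succ_apply' g n _).symm
        _ ≤ Ordinal.nfp g (α + 1) := Ordinal.iterate_le_nfp g _ _
    · exact (lt_add_one α).le.trans (Ordinal.le_nfp g _)
  · obtain ⟨β, hβ, hεβ, hβγ⟩ := hcof ε hε
    exact (hβ.2.2 ε hεβ).trans hβγ

theorem IsDisjFamilyLT.sdiff_empty {κ χ : Cardinal} {A : Set (Set Ordinal)}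
    (hA : IsDisjFamilyLT κ χ A) (hκ : ℵ₀ ≤ κ) : IsDisjFamilyLT κ χ (A \ {∅}) := by
  refine ⟨fun a ha => hA.1 a ha.1, hA.2.1.subset sdiff_subset, ?_⟩
  have hcard : #A = Cardinal.lift.{1} κ := hA.2.2
  rw [HasCard, mk_sdiff_singleton_of_aleph0_le (hcard ▸ aleph0_le_lift.mpr hκ), hcard]

theorem lt_of_setLT {S : Set Ordinal} {a : Ordinal → Set Ordinal}
    (hne : ∀ δ ∈ S, (a δ).Nonempty) (hmono : ∀ δ ∈ S, ∀ δ' ∈ S, δ < δ' → SetLT (a δ) (a δ'))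
    {δ δ' : Ordinal} (hδ : δ ∈ S) (hδ' : δ' ∈ S) (h : SetLT (a δ) (a δ')) : δ < δ' := by
  obtain ⟨α, hα⟩ := hne δ hδ
  obtain ⟨β, hβ⟩ := hne δ' hδ'
  refine not_le.mp fun hle => ?_
  rcases hle.lt_or_eq with hlt | rfl
  · exact (h α hα β hβ).asymm (hmono δ' hδ' δ hδ hlt β hβ α hα)
  · exact lt_irrefl α (h α hα α hα)

theorem injOn_of_setLT {S : Set Ordinal} {a : Ordinal → Set Ordinal}
    (hne : ∀ δ ∈ S, (a δ).Nonempty) (hmono : ∀ δ ∈ S, ∀ δ' ∈ S, δ < δ' → SetLT (a δ) (a δ')) :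
    InjOn a S := by
  intro δ hδ δ' hδ' heq
  have hself : ∀ η ∈ S, ¬SetLT (a η) (a η) := fun η hη h =>
    lt_irrefl η (lt_of_setLT hne hmono hη hη h)
  rcases lt_trichotomy δ δ' with hlt | heq' | hlt
  · exact absurd (heq ▸ hmono δ hδ δ' hδ' hlt) (hself δ' hδ')
  · exact heq'
  · exact absurd (heq ▸ hmono δ' hδ' δ hδ hlt) (hself δ hδ)

/-- A form of Fodor's lemma: if every `ε` had a bounded fiber, the closure points of the bounds
would form a club avoiding every `γ` with `P γ ε`, `ε < γ`. -/
theorem exists_unbounded_fiber_of_forall_club {κ : Cardinal.{0}} (hκ : κ.IsRegular)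
    (hunc : ℵ₀ < κ) {P : Ordinal → Ordinal → Prop}
    (hP : ∀ D, IsClubBelow D κ.ord → ∃ γ ∈ D, ∃ ε < γ, P γ ε) :
    ∃ ε < κ.ord, ∀ x < κ.ord, ∃ γ < κ.ord, x < γ ∧ P γ ε := by
  by_contra! h
  choose! bound hbound_lt hbound using h
  obtain ⟨γ, ⟨hγ, -, hclosed⟩, ε, hεγ, hPγ⟩ := hP _ (isClubBelow_closurePoints hκ hunc hbound_lt)
  exact hbound ε (hεγ.trans hγ) γ hγ (hclosed ε hεγ) hPγ

theorem exists_separated_of_unbounded {κ : Cardinal.{0}} (hκ : κ.IsRegular) (hunc : ℵ₀ < κ)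
    {T : Set Ordinal} (hT : T ⊆ Iio κ.ord) (hub : ∀ x < κ.ord, ∃ γ ∈ T, x < γ)
    {a : Ordinal → Set Ordinal}
    (ha : ∀ γ ∈ T, a γ ⊆ Iio κ.ord ∧ #(a γ) < Cardinal.lift.{1} κ) :
    ∃ S ⊆ T, #S = Cardinal.lift.{1} κ ∧ ∀ δ ∈ S, ∀ δ' ∈ S, δ < δ' → ∀ α ∈ a δ, α < δ' := by
  have hlim : Order.IsSuccLimit κ.ord := isSuccLimit_ord hκ.aleph0_le
  choose! g hgT hg_gt using hub
  have hbdd : ∀ y < κ.ord, BddAbove (a (g y)) := fun y hy =>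
    ⟨κ.ord, fun _ h => ((ha _ (hgT y hy)).1 h).le⟩
  set f : Ordinal → Ordinal := fun y => max (g y) (sSup (a (g y)))
  have hf : ∀ y < κ.ord, f y < κ.ord := fun y hy =>
    max_lt (hT (hgT y hy)) (hκ.sSup_lt_ord (ha _ (hgT y hy)).1 (ha _ (hgT y hy)).2)
  set E := closurePoints f κ.ord
  have hE := isClubBelow_closurePoints hκ hunc hf
  have hsep : ∀ δ ∈ E, ∀ δ' ∈ E, δ < δ' → f δ < g δ' := fun δ _ δ' hδ' h =>
    (hδ'.2.2 δ h).trans (hg_gt δ' hδ'.1)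
  have hmono : StrictMonoOn g E := fun δ hδ δ' hδ' h =>
    (le_max_left _ _).trans_lt (hsep δ hδ δ' hδ' h)
  refine ⟨g '' E, image_subset_iff.mpr fun δ hδ => hgT δ hδ.1, ?_, ?_⟩
  · rw [mk_image_eq_of_injOn _ _ hmono.injOn]
    refine hκ.mk_eq_of_unbounded hE.1 fun x hx => ?_
    obtain ⟨δ, hδ, hxδ⟩ := hE.2.1 (x + 1) (hlim.add_one_lt hx)
    exact ⟨δ, hδ, (lt_add_one x).trans_le hxδ⟩
  · rintro _ ⟨δ, hδ, rfl⟩ _ ⟨δ', hδ', rfl⟩ hlt α hα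
    have hδδ' : δ < δ' := (hmono.lt_iff_lt hδ hδ').mp hlt
    exact ((le_csSup (hbdd δ hδ.1) hα).trans (le_max_right _ _)).trans_lt
      (hsep δ hδ δ' hδ' hδδ')

theorem stmt9_general (κ θ χ : Cardinal) (c : Ordinal → Ordinal → Ordinal)
    (hκreg : κ.IsRegular) (hκunc : ℵ₀ < κ)
    (hχ2 : χ < κ)
    (H : ∀ A : Set (Set Ordinal), IsDisjFamilyLT κ χ A →
      ∀ D : Set Ordinal, IsClubBelow D κ.ord → ∀ i < θ.ord,
        ∃ γ ∈ D, ∃ a ∈ A, ∃ ε < γ, (∀ β ∈ a, γ < β) ∧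
          ∀ α, ε < α → α < γ → ∀ β ∈ a, i < c α β) :
    ∀ A : Set (Set Ordinal), IsDisjFamilyLT κ χ A → ∀ i < θ.ord,
      ∃ B ⊆ A, HasCard B κ ∧
        ∀ a ∈ B, ∀ b ∈ B, SetLT a b → ∀ α ∈ a, ∀ β ∈ b, i < c α β := by
  intro A₀ hA₀ i hi
  -- `∅` lies vacuously above every `γ`, so it could be chosen for all `γ` at once.
  set A := A₀ \ {∅}
  have hA : IsDisjFamilyLT κ χ A := hA₀.sdiff_empty hκreg.aleph0_le
  set P : Ordinal → Ordinal → Prop := fun γ ε =>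
    ∃ a ∈ A, (∀ β ∈ a, γ < β) ∧ ∀ α, ε < α → α < γ → ∀ β ∈ a, i < c α β
  obtain ⟨ε, hε, hfiber⟩ := exists_unbounded_fiber_of_forall_club hκreg hκunc (P := P)
    fun D hD => by
      obtain ⟨γ, hγD, a, ha, ε, hεγ, hγa, hcol⟩ := H A hA D hD i hi
      exact ⟨γ, hγD, ε, hεγ, a, ha, hγa, hcol⟩
  set T := {γ | γ < κ.ord ∧ ε < γ ∧ P γ ε}
  have hT : ∀ x < κ.ord, ∃ γ ∈ T, x < γ := fun x hx => by
    obtain ⟨γ, hγ, hxγ, hPγ⟩ := hfiber (max x ε) (max_lt hx hε)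
    exact ⟨γ, ⟨hγ, (le_max_right _ _).trans_lt hxγ, hPγ⟩, (le_max_left _ _).trans_lt hxγ⟩
  choose! aa haaA haa_gt haa_col using fun γ (hγ : γ ∈ T) => hγ.2.2
  obtain ⟨S, hST, hS, hsep⟩ := exists_separated_of_unbounded hκreg hκunc (fun _ h => h.1) hT
    fun γ hγ => ⟨(hA.1 _ (haaA γ hγ)).1, (hA.1 _ (haaA γ hγ)).2.trans (lift_lt.2 hχ2)⟩
  have hne : ∀ δ ∈ S, (aa δ).Nonempty := fun δ hδ =>
    nonempty_iff_ne_empty.2 (haaA δ (hST hδ)).2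
  have hmono : ∀ δ ∈ S, ∀ δ' ∈ S, δ < δ' → SetLT (aa δ) (aa δ') := fun δ hδ δ' hδ' h α hα β hβ =>
    (hsep δ hδ δ' hδ' h α hα).trans (haa_gt δ' (hST hδ') β hβ)
  refine ⟨aa '' S, ?_, ?_, ?_⟩
  · rintro _ ⟨δ, hδ, rfl⟩
    exact (haaA δ (hST hδ)).1
  · rw [HasCard, mk_image_eq_of_injOn _ _ (injOn_of_setLT hne hmono), hS]
  · rintro _ ⟨δ, hδ, rfl⟩ _ ⟨δ', hδ', rfl⟩ hlt α hα β hβ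
    exact haa_col δ' (hST hδ') α ((hST hδ).2.1.trans (haa_gt δ (hST hδ) α hα))
      (hsep δ hδ δ' hδ' (lt_of_setLT hne hmono hδ hδ' hlt) α hα) β hβ

theorem stmt9 (κ θ χ : Cardinal) (c : Ordinal → Ordinal → Ordinal)
    (hκreg : κ.IsRegular) (hκunc : ℵ₀ < κ) (hθκ : θ ≤ κ)
    (hχ1 : ℵ₀ ≤ χ) (hχ2 : χ < κ)
    (hc : IsColoring κ θ c)
    (H : ∀ A : Set (Set Ordinal), IsDisjFamilyLT κ χ A →
      ∀ D : Set Ordinal, IsClubBelow D κ.ord → ∀ i < θ.ord,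
        ∃ γ ∈ D, ∃ a ∈ A, ∃ ε < γ, (∀ β ∈ a, γ < β) ∧
          ∀ α, ε < α → α < γ → ∀ β ∈ a, i < c α β) :
    ∀ A : Set (Set Ordinal), IsDisjFamilyLT κ χ A → ∀ i < θ.ord,
      ∃ B ⊆ A, HasCard B κ ∧
        ∀ a ∈ B, ∀ b ∈ B, SetLT a b → ∀ α ∈ a, ∀ β ∈ b, i < c α β :=
  stmt9_general κ θ χ c hκreg hκunc hχ2 H
end
end

section
/- Fix a C-sequence ⟨C_α : α < κ⟩ and the derived walk functions. If λ₂(γ, β) < α < γ < β < κ, then tr(γ, β) is an initial segment of tr(α, β), and moreover either γ ∈ im(tr(α, β)), or γ ∈ acc(C_δ) where δ = min(im(tr(γ, β))). -/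
open Cardinal Set Ordinal

noncomputable section

/-- `D` is a club in (the ordinal) `o`: a closed and unbounded subset of `o`. -/
def IsClubIn (D : Set Ordinal) (o : Ordinal) : Prop :=
  D ⊆ Set.Iio o ∧ (∀ α < o, ∃ β ∈ D, α ≤ β) ∧
    ∀ γ < o, 0 < γ → (∀ x < γ, ∃ β ∈ D, x < β ∧ β < γ) → γ ∈ D

/-- `S` is stationary in `o`: it meets every club in `o`. -/
def IsStationaryIn (S : Set Ordinal) (o : Ordinal) : Prop :=
  ∀ D, IsClubIn D o → (S ∩ D).Nonempty

/-- A `C`-sequence over `κ`. -/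
def IsCSeq (κ : Cardinal) (C : Ordinal → Set Ordinal) : Prop :=
  C 0 = ∅ ∧ (∀ α, C (α + 1) = {α}) ∧
    ∀ α < κ.ord, Order.IsSuccLimit α → IsClubIn (C α) α

/-- The walk `Tr(α,β)` from `β` down to `α` along the `C`-sequence `C`. -/
def walk (C : Ordinal → Set Ordinal) (α β : Ordinal) : ℕ → Ordinal
  | 0 => β
  | n + 1 =>
      if α < walk C α β n then sInf {γ ∈ C (walk C α β n) | α ≤ γ} else α

/-- `ρ₂(α,β)`: the number of steps of the walk from `β` down to `α`. -/
def rho2 (C : Ordinal → Set Ordinal) (α β : Ordinal) : ℕ :=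
  sInf {n : ℕ | walk C α β n = α}

/-- `λ₂(α,β) = sup (α ∩ {sup (C_δ ∩ α) : δ ∈ im (tr (α,β))})`. -/
def lambda2 (C : Ordinal → Set Ordinal) (α β : Ordinal) : Ordinal :=
  sSup {x : Ordinal | x < α ∧
    ∃ n < rho2 C α β, x = sSup (C (walk C α β n) ∩ Set.Iio α)}

/-- The set of accumulation points of `s` that belong to `s`. -/
def accSet (s : Set Ordinal) : Set Ordinal :=
  {δ ∈ s | 0 < δ ∧ ∀ x < δ, ∃ y ∈ s, x < y ∧ y < δ}

/-- `c` is a closed coloring: for all `β < κ` and `i ≤ θ`, the set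
`{α < β : c α β ≤ i}` contains all of its accumulation points below `β`. -/
def ClosedColoring (κ θ : Cardinal) (c : Ordinal → Ordinal → Ordinal) : Prop :=
  ∀ β < κ.ord, ∀ i ≤ θ.ord, ∀ γ < β, 0 < γ →
    (∀ x < γ, ∃ α, x < α ∧ α < γ ∧ c α β ≤ i) → c γ β ≤ i


/-!
Every step of the walk from `β` to `γ` leaves some `δ = Tr(γ, β)(n)` with `γ < δ`. If
`sup (C_δ ∩ γ) < γ`, this supremum is at most `λ₂(γ, β) < α`, so `C_δ` misses `[α, γ)` and the
walks towards `α` and towards `γ` take the same next step. Otherwise `γ` is an accumulation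
point of the club `C_δ`, hence `γ ∈ C_δ` and the walk to `γ` ends at the next step. So the two
walks agree up to the last step of `tr(γ, β)`, and at that step either they agree once more,
putting `γ` on `tr(α, β)`, or `γ ∈ acc(C_δ)` for the last `δ`.
-/

theorem sep_le_eq_sep_le_of_sSup_inter_Iio_lt {ι : Type*} [ConditionallyCompleteLinearOrder ι]
    {s : Set ι} {a c : ι} (hac : a ≤ c) (hs : sSup (s ∩ Iio c) < a) :
    {x ∈ s | a ≤ x} = {x ∈ s | c ≤ x} := by
  ext x
  refine ⟨fun hx => ⟨hx.1, not_lt.mp fun hxc => ?_⟩, fun hx => ⟨hx.1, hac.trans hx.2⟩⟩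
  have hbdd : BddAbove (s ∩ Iio c) := ⟨c, fun _ hy => hy.2.le⟩
  exact (hx.2.trans_lt ((le_csSup hbdd ⟨hx.1, hxc⟩).trans_lt hs)).false

namespace IsCSeq

variable {κ : Cardinal} {C : Ordinal → Set Ordinal} {a γ δ : Ordinal}

theorem subset_Iio (hC : IsCSeq κ C) (hδ : δ < κ.ord) : C δ ⊆ Iio δ := by
  rcases zero_or_succ_or_isSuccLimit δ with rfl | ⟨b, rfl⟩ | hlim
  · simp [hC.1]
  · simp [Order.succ_eq_add_one, hC.2.1 b]
  · exact (hC.2.2 δ hδ hlim).1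

theorem sep_le_nonempty (hC : IsCSeq κ C) (hδ : δ < κ.ord) (haδ : a < δ) :
    {x ∈ C δ | a ≤ x}.Nonempty := by
  rcases zero_or_succ_or_isSuccLimit δ with rfl | ⟨b, rfl⟩ | hlim
  · exact (not_lt_zero haδ).elim
  · exact ⟨b, by simp [Order.succ_eq_add_one, hC.2.1 b], Order.lt_succ_iff.mp haδ⟩
  · exact (hC.2.2 δ hδ hlim).2.1 a haδ

theorem mem_accSet_of_sSup_inter_Iio_eq (hC : IsCSeq κ C) (hδ : δ < κ.ord) (hγδ : γ < δ)
    (hγ : 0 < γ) (hs : sSup (C δ ∩ Iio γ) = γ) : γ ∈ accSet (C δ) := by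
  have hne : (C δ ∩ Iio γ).Nonempty := by
    by_contra h
    rw [not_nonempty_iff_eq_empty.mp h, csSup_empty] at hs
    exact hγ.ne hs
  have hacc : ∀ x < γ, ∃ y ∈ C δ, x < y ∧ y < γ := fun x hx => by
    obtain ⟨y, ⟨hy, hyγ⟩, hxy⟩ := exists_lt_of_lt_csSup hne (hs ▸ hx)
    exact ⟨y, hy, hxy, hyγ⟩
  have hlim : Order.IsSuccLimit δ := by
    rcases zero_or_succ_or_isSuccLimit δ with rfl | ⟨b, rfl⟩ | hlim
    · exact (not_lt_zero hγδ).elim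
    · have hC1 : C (Order.succ b) = {b} := by rw [Order.succ_eq_add_one, hC.2.1]
      obtain ⟨y, hy, -, hyγ⟩ := hacc 0 hγ
      obtain ⟨z, hz, hyz, -⟩ := hacc y hyγ
      rw [hC1, mem_singleton_iff] at hy hz
      exact (hyz.ne (hy.trans hz.symm)).elim
    · exact hlim
  exact ⟨(hC.2.2 δ hδ hlim).2.2 γ hγδ hγ hacc, hγ, hacc⟩

end IsCSeq

section Walk

variable {κ : Cardinal} {C : Ordinal → Set Ordinal} {a α γ β : Ordinal} {n : ℕ}

theorem walk_succ_of_lt (h : a < walk C a β n) :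
    walk C a β (n + 1) = sInf {x ∈ C (walk C a β n) | a ≤ x} := by
  rw [walk, if_pos h]

theorem walk_succ_mem (hC : IsCSeq κ C) (hδ : walk C a β n < κ.ord) (h : a < walk C a β n) :
    walk C a β (n + 1) ∈ {x ∈ C (walk C a β n) | a ≤ x} :=
  walk_succ_of_lt h ▸ csInf_mem (hC.sep_le_nonempty hδ h)

theorem walk_mem_Icc (hC : IsCSeq κ C) (hβ : β < κ.ord) (haβ : a ≤ β) (n : ℕ) :
    walk C a β n ∈ Icc a β := by
  induction n with
  | zero => exact ⟨haβ, le_rfl⟩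
  | succ n ih =>
    by_cases h : a < walk C a β n
    · have hmem := walk_succ_mem hC (ih.2.trans_lt hβ) h
      exact ⟨hmem.2, (hC.subset_Iio (ih.2.trans_lt hβ) hmem.1).le.trans ih.2⟩
    · rw [walk, if_neg h]
      exact ⟨le_rfl, haβ⟩

theorem walk_succ_lt (hC : IsCSeq κ C) (hβ : β < κ.ord) (haβ : a ≤ β) (h : a < walk C a β n) :
    walk C a β (n + 1) < walk C a β n :=
  have hδ := (walk_mem_Icc hC hβ haβ n).2.trans_lt hβ
  hC.subset_Iio hδ (walk_succ_mem hC hδ h).1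

theorem exists_walk_eq (hC : IsCSeq κ C) (hβ : β < κ.ord) (haβ : a ≤ β) :
    ∃ n, walk C a β n = a := by
  by_contra! h
  obtain ⟨n, hn⟩ := WellFounded.not_rel_apply_succ (r := (· < ·)) (walk C a β)
  exact hn (walk_succ_lt hC hβ haβ ((walk_mem_Icc hC hβ haβ n).1.lt_of_ne' (h n)))

theorem walk_rho2 (hC : IsCSeq κ C) (hβ : β < κ.ord) (haβ : a ≤ β) :
    walk C a β (rho2 C a β) = a :=
  Nat.sInf_mem (exists_walk_eq hC hβ haβ)

theorem lt_walk_of_lt_rho2 (hC : IsCSeq κ C) (hβ : β < κ.ord) (haβ : a ≤ β)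
    (hn : n < rho2 C a β) : a < walk C a β n :=
  (walk_mem_Icc hC hβ haβ n).1.lt_of_ne' fun h => (Nat.sInf_le h).not_gt hn

theorem rho2_pos (hC : IsCSeq κ C) (hβ : β < κ.ord) (haβ : a < β) : 0 < rho2 C a β := by
  by_contra! h
  have hwalk := walk_rho2 hC hβ haβ.le
  rw [Nat.le_zero.mp h] at hwalk
  exact haβ.ne' hwalk

theorem walk_succ_eq_of_mem (h : a < walk C a β n) (hmem : a ∈ C (walk C a β n)) :
    walk C a β (n + 1) = a := by
  rw [walk_succ_of_lt h]
  exact IsLeast.csInf_eq ⟨⟨hmem, le_rfl⟩, fun _ hx => hx.2⟩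

theorem notMem_accSet_of_succ_lt_rho2 (hC : IsCSeq κ C) (hβ : β < κ.ord) (haβ : a ≤ β)
    (hn : n + 1 < rho2 C a β) : a ∉ accSet (C (walk C a β n)) := fun hacc => by
  have h := lt_walk_of_lt_rho2 hC hβ haβ hn
  rw [walk_succ_eq_of_mem (lt_walk_of_lt_rho2 hC hβ haβ (by omega)) hacc.1] at h
  exact h.false

theorem sSup_inter_Iio_le_lambda2 (hn : n < rho2 C γ β)
    (hs : sSup (C (walk C γ β n) ∩ Iio γ) < γ) :
    sSup (C (walk C γ β n) ∩ Iio γ) ≤ lambda2 C γ β :=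
  le_csSup ⟨γ, fun _ hx => hx.1.le⟩ ⟨hs, n, hn, rfl⟩

theorem walk_succ_eq_walk_succ (hC : IsCSeq κ C) (hβ : β < κ.ord) (hαγ : α ≤ γ) (hγβ : γ ≤ β)
    (hlam : lambda2 C γ β < α) (hn : n < rho2 C γ β) (heq : walk C α β n = walk C γ β n)
    (hacc : γ ∉ accSet (C (walk C γ β n))) :
    walk C α β (n + 1) = walk C γ β (n + 1) := by
  have hγδ := lt_walk_of_lt_rho2 hC hβ hγβ hn
  have hδ := (walk_mem_Icc hC hβ hγβ n).2.trans_lt hβ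
  have hγ : 0 < γ := zero_le.trans_lt (hlam.trans_le hαγ)
  have hs : sSup (C (walk C γ β n) ∩ Iio γ) < γ :=
    (csSup_le' fun _ hx => hx.2.le).lt_of_ne
      fun h => hacc (hC.mem_accSet_of_sSup_inter_Iio_eq hδ hγδ hγ h)
  rw [walk_succ_of_lt (heq ▸ hαγ.trans_lt hγδ), walk_succ_of_lt hγδ, heq,
    sep_le_eq_sep_le_of_sSup_inter_Iio_lt hαγ ((sSup_inter_Iio_le_lambda2 hn hs).trans_lt hlam)]

theorem walk_eq_walk_of_lambda2_lt (hC : IsCSeq κ C) (hβ : β < κ.ord) (hαγ : α ≤ γ)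
    (hγβ : γ ≤ β) (hlam : lambda2 C γ β < α) :
    ∀ n < rho2 C γ β, walk C α β n = walk C γ β n := by
  intro n hn
  induction n with
  | zero => rfl
  | succ n ih =>
    exact walk_succ_eq_walk_succ hC hβ hαγ hγβ hlam (by omega) (ih (by omega))
      (notMem_accSet_of_succ_lt_rho2 hC hβ hγβ hn)

theorem rho2_le_rho2_of_lambda2_lt (hC : IsCSeq κ C) (hβ : β < κ.ord) (hαγ : α ≤ γ)
    (hγβ : γ ≤ β) (hlam : lambda2 C γ β < α) : rho2 C γ β ≤ rho2 C α β := by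
  by_contra! h
  have hwalk := walk_eq_walk_of_lambda2_lt hC hβ hαγ hγβ hlam _ h
  rw [walk_rho2 hC hβ (hαγ.trans hγβ)] at hwalk
  exact (hαγ.trans_lt (lt_walk_of_lt_rho2 hC hβ hγβ h)).ne hwalk

end Walk

theorem stmt11_general (κ : Cardinal) (C : Ordinal → Set Ordinal)
    (hC : IsCSeq κ C)
    (α γ β : Ordinal) (h1 : α < γ) (h2 : γ < β) (h3 : β < κ.ord)
    (h4 : lambda2 C γ β < α) :
    (rho2 C γ β ≤ rho2 C α β ∧
      ∀ n < rho2 C γ β, walk C α β n = walk C γ β n) ∧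
    ((∃ n < rho2 C α β, walk C α β n = γ) ∨
      ∃ n : ℕ, n + 1 = rho2 C γ β ∧ γ ∈ accSet (C (walk C γ β n))) := by
  have hle := rho2_le_rho2_of_lambda2_lt hC h3 h1.le h2.le h4
  have hagree := walk_eq_walk_of_lambda2_lt hC h3 h1.le h2.le h4
  refine ⟨⟨hle, hagree⟩, ?_⟩
  obtain ⟨k, hk⟩ := Nat.exists_eq_add_one_of_ne_zero (rho2_pos hC h3 h2).ne'
  by_cases hacc : γ ∈ accSet (C (walk C γ β k))
  · exact Or.inr ⟨k, hk.symm, hacc⟩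
  · have hγ : walk C α β (k + 1) = γ := by
      rw [walk_succ_eq_walk_succ hC h3 h1.le h2.le h4 (by omega) (hagree k (by omega)) hacc,
        ← hk, walk_rho2 hC h3 h2.le]
    refine Or.inl ⟨k + 1, (hk ▸ hle).lt_of_ne fun h => h1.ne ?_, hγ⟩
    rw [← hγ, h, walk_rho2 hC h3 (h1.trans h2).le]

theorem stmt11 (κ : Cardinal) (C : Ordinal → Set Ordinal)
    (hκreg : κ.IsRegular) (hκunc : ℵ₀ < κ) (hC : IsCSeq κ C)
    (α γ β : Ordinal) (h1 : α < γ) (h2 : γ < β) (h3 : β < κ.ord)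
    (h4 : lambda2 C γ β < α) :
    (rho2 C γ β ≤ rho2 C α β ∧
      ∀ n < rho2 C γ β, walk C α β n = walk C γ β n) ∧
    ((∃ n < rho2 C α β, walk C α β n = γ) ∨
      ∃ n : ℕ, n + 1 = rho2 C γ β ∧ γ ∈ accSet (C (walk C γ β n))) :=
  stmt11_general κ C hC α γ β h1 h2 h3 h4
end
end
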